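/- arXiv:2101.00096 — 7 statements merged into one kernel-verified Lean document; each statement's English description precedes it below -/
import Mathlib

section
/- Let n ≥ 1, let Ω ⊆ ℝⁿ be an open set, and let a, b ∈ ℝ. Then for every u ∈ C_c^∞(Ω \ {0}), |(n − a − b − 1)/2| · ∫_Ω |u(x)|² / |x|^{a+b+1} dx ≤ (∫_Ω |u(x)| / |x|^{a} dx) · sup_{x ∈ ℝⁿ \ {0}} (|∇u(x)| / |x|^{b}). -/
open MeasureTheory Real

set_option maxHeartbeats 1000000 in
theorem ckn_euclidean_p_one_q_infty
    (n : ℕ) (hn : 1 ≤ n) (Ω : Set (EuclideanSpace ℝ (Fin n))) (hΩ : IsOpen Ω)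
    (a b : ℝ) (u : EuclideanSpace ℝ (Fin n) → ℝ)
    (hu : ContDiff ℝ (⊤ : ℕ∞) u) (hcpt : HasCompactSupport u)
    (hsupp : tsupport u ⊆ Ω \ {0}) :
    |((n : ℝ) - a - b - 1) / 2| * ∫ x in Ω, |u x| ^ 2 / ‖x‖ ^ (a + b + 1) ≤
      (∫ x in Ω, |u x| / ‖x‖ ^ a) *
        ⨆ (x : EuclideanSpace ℝ (Fin n)) (_ : x ≠ 0), ‖gradient u x‖ / ‖x‖ ^ b := by
  classical
  set M := ⨆ (x : EuclideanSpace ℝ (Fin n)) (_ : x ≠ 0), ‖gradient u x‖ / ‖x‖ ^ b with hMdef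
  set c : ℝ := a + b + 1 with hcdef
  have hu1 : ContDiff ℝ 1 u := hu.of_le (by simp)
  have hud : Differentiable ℝ u := hu1.differentiable one_ne_zero
  have hu0 : ∀ x, x ∉ tsupport u → u x = 0 := fun x hx => image_eq_zero_of_notMem_tsupport hx
  have h0t : (0 : EuclideanSpace ℝ (Fin n)) ∉ tsupport u := fun h => (hsupp h).2 rfl
  obtain ⟨ε, hε, hball⟩ := Metric.isOpen_iff.1 (isClosed_tsupport u).isOpen_compl 0 h0t
  have hout : ∀ x : EuclideanSpace ℝ (Fin n), u x ≠ 0 → ε ≤ ‖x‖ := by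
    intro x hx
    by_contra h
    exact hx (hu0 x (hball (by simpa [Metric.mem_ball, dist_zero_right] using not_le.1 h)))
  -- gradient facts
  have hgradnorm : ∀ x, ‖gradient u x‖ = ‖fderiv ℝ u x‖ := fun x => by
    rw [gradient]; exact (InnerProductSpace.toDual ℝ _).symm.norm_map _
  have hgrad0 : ∀ x, x ∉ tsupport u → gradient u x = 0 := by
    intro x hx
    have hopen : IsOpen (tsupport u)ᶜ := (isClosed_tsupport u).isOpen_compl
    have hev : u =ᶠ[nhds x] (fun _ => (0 : ℝ)) := by
      filter_upwards [hopen.mem_nhds hx] with y hy using hu0 y hy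
    rw [hev.gradient_eq]
    simp [gradient_const]
  -- bound for the sup
  obtain ⟨C, hC⟩ : ∃ C, ∀ x ∈ tsupport u, ‖gradient u x‖ / ‖x‖ ^ b ≤ C := by
    have hcont : ContinuousOn (fun x => ‖gradient u x‖ / ‖x‖ ^ b) (tsupport u) := by
      apply ContinuousOn.div
      · exact (Continuous.norm ((InnerProductSpace.toDual ℝ _).symm.continuous.comp
          (hu1.continuous_fderiv one_ne_zero))).continuousOn
      · intro x hx
        have hx0 : x ≠ 0 := fun h => h0t (h ▸ hx)
        exact ((Real.continuousAt_rpow_const _ _ (Or.inl (norm_ne_zero_iff.2 hx0))).comp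
          continuous_norm.continuousAt).continuousWithinAt
      · intro x hx
        have hx0 : x ≠ 0 := fun h => h0t (h ▸ hx)
        exact (Real.rpow_pos_of_pos (norm_pos_iff.2 hx0) b).ne'
    obtain ⟨C, hC⟩ := hcpt.exists_bound_of_continuousOn hcont
    refine ⟨C, fun x hx => ?_⟩
    have h := hC x hx
    rw [Real.norm_eq_abs] at h
    exact (le_abs_self _).trans h
  have hqC : ∀ x : EuclideanSpace ℝ (Fin n), x ≠ 0 → ‖gradient u x‖ / ‖x‖ ^ b ≤ max C 0 := by
    intro x hx
    by_cases hxt : x ∈ tsupport u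
    · exact (hC x hxt).trans (le_max_left _ _)
    · have : ‖gradient u x‖ / ‖x‖ ^ b = 0 := by simp [hgrad0 x hxt]
      rw [this]; exact le_max_right _ _
  have hbdd : BddAbove (Set.range fun x : EuclideanSpace ℝ (Fin n) =>
      ⨆ (_ : x ≠ 0), ‖gradient u x‖ / ‖x‖ ^ b) := by
    refine ⟨max C 0, ?_⟩
    rintro - ⟨x, rfl⟩
    dsimp only
    by_cases hx : x ≠ 0
    · rw [ciSup_pos hx]; exact hqC x hx
    · have : IsEmpty (x ≠ 0) := ⟨fun h => hx h⟩
      rw [Real.iSup_of_isEmpty _]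
      exact le_max_right _ _
  have hM0 : 0 ≤ M := by
    have h1 : (⨆ (_ : (0 : EuclideanSpace ℝ (Fin n)) ≠ 0),
        ‖gradient u (0 : EuclideanSpace ℝ (Fin n))‖ / ‖(0 : EuclideanSpace ℝ (Fin n))‖ ^ b) ≤ M :=
      le_ciSup hbdd 0
    have : IsEmpty ((0 : EuclideanSpace ℝ (Fin n)) ≠ 0) := ⟨fun h => h rfl⟩
    rwa [Real.iSup_of_isEmpty _] at h1
  have hMle : ∀ x : EuclideanSpace ℝ (Fin n), x ≠ 0 → ‖gradient u x‖ / ‖x‖ ^ b ≤ M := by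
    intro x hx
    have h1 : (⨆ (_ : x ≠ 0), ‖gradient u x‖ / ‖x‖ ^ b) ≤ M := le_ciSup hbdd x
    rwa [ciSup_pos hx] at h1
  -- weights
  set r : ℝ := -c / 2 with hrdef
  set ra : ℝ := -a / 2 with hradef
  set w : EuclideanSpace ℝ (Fin n) → ℝ := fun y => (‖y‖ ^ 2 : ℝ) ^ r with hwdef
  set wa : EuclideanSpace ℝ (Fin n) → ℝ := fun y => (‖y‖ ^ 2 : ℝ) ^ ra with hwadef
  have hw_eq : ∀ x : EuclideanSpace ℝ (Fin n), x ≠ 0 → w x = ‖x‖ ^ (-c) := by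
    intro x hx
    show ((‖x‖ ^ 2 : ℝ)) ^ r = ‖x‖ ^ (-c)
    rw [← Real.rpow_natCast ‖x‖ 2, ← Real.rpow_mul (norm_nonneg x)]
    congr 1
    rw [hrdef]; push_cast; ring
  have hwa_eq : ∀ x : EuclideanSpace ℝ (Fin n), x ≠ 0 → wa x = ‖x‖ ^ (-a) := by
    intro x hx
    show ((‖x‖ ^ 2 : ℝ)) ^ ra = ‖x‖ ^ (-a)
    rw [← Real.rpow_natCast ‖x‖ 2, ← Real.rpow_mul (norm_nonneg x)]
    congr 1
    rw [hradef]; push_cast; ring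
  have hw_nonneg : ∀ x : EuclideanSpace ℝ (Fin n), 0 ≤ w x := fun x =>
    Real.rpow_nonneg (by positivity) _
  have hwa_nonneg : ∀ x : EuclideanSpace ℝ (Fin n), 0 ≤ wa x := fun x =>
    Real.rpow_nonneg (by positivity) _
  have hwd : ∀ x : EuclideanSpace ℝ (Fin n), x ≠ 0 →
      HasFDerivAt w ((r * (‖x‖ ^ 2 : ℝ) ^ (r - 1)) • (2 • (innerSL ℝ x))) x := by
    intro x hx
    have h1 : HasFDerivAt (fun y : EuclideanSpace ℝ (Fin n) => (‖y‖ ^ 2 : ℝ))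
        (2 • (innerSL ℝ x)) x := (hasStrictFDerivAt_norm_sq x).hasFDerivAt
    have h2 : HasDerivAt (fun t : ℝ => t ^ r) (r * (‖x‖ ^ 2) ^ (r - 1)) (‖x‖ ^ 2) :=
      Real.hasDerivAt_rpow_const (Or.inl (pow_ne_zero 2 (norm_ne_zero_iff.2 hx)))
    exact h2.comp_hasFDerivAt x h1
  -- cutoff
  have hε2 : (0 : ℝ) < ε / 3 := by linarith
  set φ : ContDiffBump (0 : EuclideanSpace ℝ (Fin n)) := ⟨ε/3, ε/2, hε2, by linarith⟩ with hφdef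
  set χ : EuclideanSpace ℝ (Fin n) → ℝ := fun y => 1 - φ y with hχdef
  have hχ1 : ∀ y : EuclideanSpace ℝ (Fin n), ε/2 ≤ ‖y‖ → χ y = 1 := by
    intro y hy
    have h0 : φ y = 0 := by
      apply Function.notMem_support.1
      rw [φ.support_eq]
      simp only [Metric.mem_ball, dist_zero_right, not_lt]
      exact hy
    show 1 - φ y = 1
    rw [h0]; ring
  have hχ0 : ∀ y : EuclideanSpace ℝ (Fin n), ‖y‖ < ε/3 → χ y = 0 := by
    intro y hy
    have h1 : φ y = 1 := φ.one_of_mem_closedBall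
      (by simp only [Metric.mem_closedBall, dist_zero_right]; exact hy.le)
    show 1 - φ y = 0
    rw [h1]; ring
  have hχmem : ∀ y : EuclideanSpace ℝ (Fin n), 0 ≤ χ y ∧ χ y ≤ 1 := fun y =>
    ⟨by simpa [hχdef] using φ.le_one (x := y), by simpa [hχdef] using φ.nonneg (x := y)⟩
  set G : EuclideanSpace ℝ (Fin n) → ℝ := fun y => χ y * w y with hGdef
  set Ga : EuclideanSpace ℝ (Fin n) → ℝ := fun y => χ y * wa y with hGadef
  have hGsm : ContDiff ℝ 1 G := by
    rw [contDiff_iff_contDiffAt]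
    intro x
    rcases eq_or_ne x 0 with rfl | hx
    · refine (contDiffAt_const (c := (0:ℝ))).congr_of_eventuallyEq ?_
      filter_upwards [Metric.ball_mem_nhds (0 : EuclideanSpace ℝ (Fin n)) hε2] with y hy
      show χ y * w y = 0
      rw [hχ0 y (by simpa [dist_zero_right] using hy), zero_mul]
    · refine ContDiffAt.mul ?_ ?_
      · exact (contDiff_const.sub φ.contDiff).contDiffAt
      · have h2 : ContDiffAt ℝ 1 (fun t : ℝ => t ^ r) (‖x‖ ^ 2) :=
          Real.contDiffAt_rpow_const_of_ne (pow_ne_zero 2 (norm_ne_zero_iff.2 hx))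
        exact h2.comp x (contDiff_norm_sq ℝ).contDiffAt
  have hGacont : Continuous Ga := by
    rw [continuous_iff_continuousAt]
    intro x
    rcases eq_or_ne x 0 with rfl | hx
    · apply continuousAt_const.congr (f := fun _ => (0:ℝ))
      symm
      filter_upwards [Metric.ball_mem_nhds (0 : EuclideanSpace ℝ (Fin n)) hε2] with y hy
      show χ y * wa y = 0
      rw [hχ0 y (by simpa [dist_zero_right] using hy), zero_mul]
    · refine ContinuousAt.mul ?_ ?_
      · exact (continuous_const.sub φ.continuous).continuousAt
      · have h1 : ContinuousAt (fun t : ℝ => t ^ ra) (‖x‖ ^ 2) :=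
          Real.continuousAt_rpow_const _ _ (Or.inl (pow_ne_zero 2 (norm_ne_zero_iff.2 hx)))
        have h2 : ContinuousAt (fun y : EuclideanSpace ℝ (Fin n) => (‖y‖ ^ 2 : ℝ)) x :=
          (continuous_norm.pow 2).continuousAt
        exact ContinuousAt.comp (g := fun t : ℝ => t ^ ra)
          (f := fun y : EuclideanSpace ℝ (Fin n) => (‖y‖ ^ 2 : ℝ)) h1 h2
  -- coordinate functions
  set e : Fin n → EuclideanSpace ℝ (Fin n) := fun i => EuclideanSpace.single i (1:ℝ) with hedef
  set g : Fin n → EuclideanSpace ℝ (Fin n) → ℝ := fun i y => G y * y i with hgdef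
  have hgsm : ∀ i, ContDiff ℝ 1 (g i) := by
    intro i
    have hp : ContDiff ℝ 1 (fun y : EuclideanSpace ℝ (Fin n) => y i) :=
      (EuclideanSpace.proj (𝕜 := ℝ) i).contDiff
    exact hGsm.mul hp
  set f : EuclideanSpace ℝ (Fin n) → ℝ := fun y => u y * u y with hfdef
  have hfsm : ContDiff ℝ 1 f := hu1.mul hu1
  have hfdiff : Differentiable ℝ f := hfsm.differentiable one_ne_zero
  have hfderiv : ∀ x, fderiv ℝ f x = (2 * u x) • fderiv ℝ u x := by
    intro x
    have h := ((hud x).hasFDerivAt.mul (hud x).hasFDerivAt).fderiv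
    rw [show fderiv ℝ f x = fderiv ℝ (u * u) x from rfl, h, two_mul, add_smul]
  have hf0 : ∀ x, x ∉ tsupport u → f x = 0 := by
    intro x hx
    show u x * u x = 0
    rw [hu0 x hx, zero_mul]
  have hfd0 : ∀ x, x ∉ tsupport u → fderiv ℝ f x = 0 := by
    intro x hx
    rw [hfderiv x, hu0 x hx]
    simp
  -- pointwise divergence identity
  have hsumsq : ∀ x : EuclideanSpace ℝ (Fin n), ∑ i, x i * x i = ‖x‖ ^ 2 := by
    intro x
    rw [← real_inner_self_eq_norm_sq]
    simp only [PiLp.inner_apply, RCLike.inner_apply, conj_trivial, mul_comm]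
  have hbasis : ∀ x : EuclideanSpace ℝ (Fin n), ∑ i, x i • e i = x := by
    intro x
    ext j
    rw [WithLp.ofLp_sum, Finset.sum_apply]
    simp [hedef, EuclideanSpace.single_apply]
  have key1 : ∀ x : EuclideanSpace ℝ (Fin n), ε ≤ ‖x‖ →
      (∑ i, fderiv ℝ (g i) x (e i)) = ((n : ℝ) - c) * w x := by
    intro x hx
    have hx0 : x ≠ 0 := by
      intro h; rw [h] at hx; simp only [norm_zero] at hx; linarith
    have hU : ∀ᶠ y in nhds x, χ y = 1 := by
      have hop : IsOpen {y : EuclideanSpace ℝ (Fin n) | ε/2 < ‖y‖} :=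
        isOpen_lt continuous_const continuous_norm
      filter_upwards [hop.mem_nhds (show ε/2 < ‖x‖ by linarith)] with y hy
      exact hχ1 y (le_of_lt hy)
    have hfe : ∀ i, fderiv ℝ (g i) x = fderiv ℝ (fun y => w y * y i) x := by
      intro i
      apply Filter.EventuallyEq.fderiv_eq
      filter_upwards [hU] with y hy
      show G y * y i = w y * y i
      rw [show G y = χ y * w y from rfl, hy, one_mul]
    have hwx := hwd x hx0
    have hder : ∀ i, HasFDerivAt (fun y : EuclideanSpace ℝ (Fin n) => w y * y i)
        (w x • (EuclideanSpace.proj (𝕜 := ℝ) i) +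
          x i • ((r * (‖x‖ ^ 2 : ℝ) ^ (r - 1)) • (2 • (innerSL ℝ x)))) x := by
      intro i
      exact hwx.mul (EuclideanSpace.proj (𝕜 := ℝ) i).hasFDerivAt
    have happ : ∀ i, fderiv ℝ (g i) x (e i)
        = w x + (2 * r * (‖x‖ ^ 2 : ℝ) ^ (r - 1)) * (x i * x i) := by
      intro i
      rw [hfe i, (hder i).fderiv]
      simp only [ContinuousLinearMap.add_apply, ContinuousLinearMap.smul_apply,
        ContinuousLinearMap.coe_smul', Pi.smul_apply, innerSL_apply_apply, smul_eq_mul, hedef]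
      rw [show (EuclideanSpace.proj (𝕜 := ℝ) i) (EuclideanSpace.single i (1:ℝ))
            = (1 : ℝ) by simp [EuclideanSpace.single_apply]]
      rw [show (inner ℝ x (EuclideanSpace.single i (1:ℝ)) : ℝ) = x i by
        simp [EuclideanSpace.inner_single_right]]
      ring
    rw [Finset.sum_congr rfl (fun i _ => happ i), Finset.sum_add_distrib,
      Finset.sum_const, ← Finset.mul_sum, hsumsq x]
    have hs : (0:ℝ) < ‖x‖ ^ 2 := pow_pos (norm_pos_iff.2 hx0) 2
    have h1 : ((‖x‖ ^ 2 : ℝ)) ^ (r - 1) * (‖x‖ ^ 2) = w x := by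
      rw [Real.rpow_sub hs, Real.rpow_one]
      field_simp
      rfl
    have h2 : (2 * r * (‖x‖ ^ 2 : ℝ) ^ (r - 1)) * (‖x‖ ^ 2) = -c * w x := by
      rw [mul_assoc, h1, hrdef]; ring
    rw [h2]
    simp only [Finset.card_univ, Fintype.card_fin, nsmul_eq_mul]
    ring
  have key2 : ∀ x : EuclideanSpace ℝ (Fin n),
      (∑ i, fderiv ℝ f x (e i) * g i x) = fderiv ℝ f x x * G x := by
    intro x
    have hLx : fderiv ℝ f x x = ∑ i, x i * fderiv ℝ f x (e i) := by
      calc fderiv ℝ f x x = fderiv ℝ f x (∑ i, x i • e i) := by rw [hbasis x]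
        _ = ∑ i, fderiv ℝ f x (x i • e i) := map_sum _ _ _
        _ = ∑ i, x i * fderiv ℝ f x (e i) := Finset.sum_congr rfl fun i _ => by
            rw [(fderiv ℝ f x).map_smul, smul_eq_mul]
    rw [hLx, Finset.sum_mul]
    exact Finset.sum_congr rfl fun i _ => by show _ = x i * fderiv ℝ f x (e i) * G x; ring
  have P1 : ∀ x, f x * (∑ i, fderiv ℝ (g i) x (e i)) = ((n : ℝ) - c) * (f x * G x) := by
    intro x
    by_cases hx : u x = 0
    · have : f x = 0 := by show u x * u x = 0; rw [hx, zero_mul]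
      rw [this, zero_mul, zero_mul, mul_zero]
    · rw [key1 x (hout x hx)]
      have hGx : G x = w x := by
        show χ x * w x = w x
        rw [hχ1 x (by linarith [hout x hx]), one_mul]
      rw [hGx]; ring
  -- integrability
  have hf_cont : Continuous f := hfsm.continuous
  have hG_cont : Continuous G := hGsm.continuous
  have hfderiv_cont : Continuous (fun x => fderiv ℝ f x) := hfsm.continuous_fderiv one_ne_zero
  have hint1 : ∀ i, Integrable (fun x => f x * fderiv ℝ (g i) x (e i)) := by
    intro i
    apply Continuous.integrable_of_hasCompactSupport
    · exact hf_cont.mul (((hgsm i).continuous_fderiv one_ne_zero).clm_apply continuous_const)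
    · apply HasCompactSupport.intro hcpt
      intro x hx
      rw [hf0 x hx, zero_mul]
  have hint2 : ∀ i, Integrable (fun x => fderiv ℝ f x (e i) * g i x) := by
    intro i
    apply Continuous.integrable_of_hasCompactSupport
    · exact (hfderiv_cont.clm_apply continuous_const).mul (hgsm i).continuous
    · apply HasCompactSupport.intro hcpt
      intro x hx
      rw [hfd0 x hx]
      simp
  have hint3 : ∀ i, Integrable (fun x => f x * g i x) := by
    intro i
    apply Continuous.integrable_of_hasCompactSupport
    · exact hf_cont.mul (hgsm i).continuous
    · apply HasCompactSupport.intro hcpt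
      intro x hx
      rw [hf0 x hx, zero_mul]
  -- integration by parts
  have hibp : ∀ i, ∫ x, f x * fderiv ℝ (g i) x (e i) = -∫ x, fderiv ℝ f x (e i) * g i x := by
    intro i
    exact integral_mul_fderiv_eq_neg_fderiv_mul_of_integrable (hint2 i) (hint1 i) (hint3 i)
      (fun x _ => hfdiff x) (fun x _ => (hgsm i).differentiable one_ne_zero x)
  have hsum1 : ∫ x, f x * ∑ i, fderiv ℝ (g i) x (e i)
      = ∑ i, ∫ x, f x * fderiv ℝ (g i) x (e i) := by
    simp_rw [Finset.mul_sum]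
    exact integral_finset_sum _ fun i _ => hint1 i
  have hsum2 : ∫ x, ∑ i, fderiv ℝ f x (e i) * g i x
      = ∑ i, ∫ x, fderiv ℝ f x (e i) * g i x :=
    integral_finset_sum _ fun i _ => hint2 i
  have hkey : ((n : ℝ) - c) * ∫ x, f x * G x = - ∫ x, fderiv ℝ f x x * G x := by
    have h1 : ∫ x, f x * ∑ i, fderiv ℝ (g i) x (e i) = ((n : ℝ) - c) * ∫ x, f x * G x := by
      rw [integral_congr_ae (Filter.Eventually.of_forall P1), integral_const_mul]
    have h2 : ∫ x, ∑ i, fderiv ℝ f x (e i) * g i x = ∫ x, fderiv ℝ f x x * G x :=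
      integral_congr_ae (Filter.Eventually.of_forall key2)
    rw [← h1, hsum1, Finset.sum_congr rfl (fun i _ => hibp i), Finset.sum_neg_distrib,
      ← hsum2, h2]
  have hInn : 0 ≤ ∫ x, f x * G x := by
    apply integral_nonneg
    intro x
    exact mul_nonneg (mul_self_nonneg (u x)) (mul_nonneg (hχmem x).1 (hw_nonneg x))
  -- pointwise bound
  have hP3 : ∀ x, |fderiv ℝ f x x * G x| ≤ 2 * M * (|u x| * Ga x) := by
    intro x
    by_cases hx : u x = 0
    · have h1 : fderiv ℝ f x = 0 := by
        rw [hfderiv x, hx, mul_zero, zero_smul]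
      rw [h1, ContinuousLinearMap.zero_apply, zero_mul, abs_zero, hx]
      simp
    · have hxε := hout x hx
      have hx0 : x ≠ 0 := by
        intro h; rw [h] at hxε; simp only [norm_zero] at hxε; linarith
      have hnx : 0 < ‖x‖ := norm_pos_iff.2 hx0
      have hχx : χ x = 1 := hχ1 x (by linarith)
      have hGx : G x = ‖x‖ ^ (-c) := by
        show χ x * w x = _
        rw [hχx, one_mul, hw_eq x hx0]
      have hGax : Ga x = ‖x‖ ^ (-a) := by
        show χ x * wa x = _
        rw [hχx, one_mul, hwa_eq x hx0]
      have hfx : fderiv ℝ f x x = 2 * u x * fderiv ℝ u x x := by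
        rw [hfderiv x]
        simp [smul_eq_mul, mul_assoc]
      have hD : |fderiv ℝ u x x| ≤ ‖gradient u x‖ * ‖x‖ := by
        rw [hgradnorm]
        calc |fderiv ℝ u x x| = ‖fderiv ℝ u x x‖ := (Real.norm_eq_abs _).symm
          _ ≤ ‖fderiv ℝ u x‖ * ‖x‖ := (fderiv ℝ u x).le_opNorm x
      have hgb : ‖gradient u x‖ ≤ M * ‖x‖ ^ b := by
        have h := hMle x hx0
        rwa [div_le_iff₀ (Real.rpow_pos_of_pos hnx b)] at h
      have hexp : ‖x‖ ^ b * ‖x‖ ^ (1:ℝ) * ‖x‖ ^ (-c) = ‖x‖ ^ (-a) := by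
        rw [← Real.rpow_add hnx, ← Real.rpow_add hnx]
        congr 1
        rw [hcdef]; ring
      calc |fderiv ℝ f x x * G x| = 2 * |u x| * |fderiv ℝ u x x| * ‖x‖ ^ (-c) := by
            rw [hfx, hGx, abs_mul, abs_mul, abs_mul, abs_two,
              abs_of_nonneg (Real.rpow_nonneg hnx.le _)]
            all_goals ring
        _ ≤ 2 * |u x| * (‖gradient u x‖ * ‖x‖) * ‖x‖ ^ (-c) := by
            have h2 : (0:ℝ) ≤ 2 * |u x| := by positivity
            have h3 : (0:ℝ) ≤ ‖x‖ ^ (-c) := Real.rpow_nonneg hnx.le _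
            exact mul_le_mul_of_nonneg_right (mul_le_mul_of_nonneg_left hD h2) h3
        _ ≤ 2 * |u x| * (M * ‖x‖ ^ b * ‖x‖) * ‖x‖ ^ (-c) := by
            have h2 : (0:ℝ) ≤ 2 * |u x| := by positivity
            have h3 : (0:ℝ) ≤ ‖x‖ ^ (-c) := Real.rpow_nonneg hnx.le _
            exact mul_le_mul_of_nonneg_right (mul_le_mul_of_nonneg_left
              (mul_le_mul_of_nonneg_right hgb hnx.le) h2) h3
        _ = 2 * M * (|u x| * (‖x‖ ^ b * ‖x‖ ^ (1:ℝ) * ‖x‖ ^ (-c))) := by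
            rw [Real.rpow_one]; ring
        _ = 2 * M * (|u x| * Ga x) := by rw [hexp, hGax]
  -- integral bound
  have hI2int : Integrable (fun x => fderiv ℝ f x x * G x) := by
    apply Continuous.integrable_of_hasCompactSupport
    · exact (hfderiv_cont.clm_apply continuous_id).mul hG_cont
    · apply HasCompactSupport.intro hcpt
      intro x hx
      rw [hfd0 x hx]
      simp
  have hmaj_int : Integrable (fun x => 2 * M * (|u x| * Ga x)) := by
    apply Integrable.const_mul
    apply Continuous.integrable_of_hasCompactSupport
    · exact hud.continuous.abs.mul hGacont
    · apply HasCompactSupport.intro hcpt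
      intro x hx
      rw [hu0 x hx]
      simp
  have hIneq : |(n : ℝ) - c| * ∫ x, f x * G x ≤ 2 * M * ∫ x, |u x| * Ga x := by
    have h1 : |((n : ℝ) - c) * ∫ x, f x * G x| = |(n : ℝ) - c| * ∫ x, f x * G x := by
      rw [abs_mul, abs_of_nonneg hInn]
    rw [← h1, hkey, abs_neg]
    calc |∫ x, fderiv ℝ f x x * G x| ≤ ∫ x, |fderiv ℝ f x x * G x| := by
          have h := norm_integral_le_integral_norm (μ := volume)
            (fun x => fderiv ℝ f x x * G x)
          simp only [Real.norm_eq_abs] at h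
          exact h
      _ ≤ ∫ x, 2 * M * (|u x| * Ga x) := integral_mono hI2int.abs hmaj_int hP3
      _ = 2 * M * ∫ x, |u x| * Ga x := integral_const_mul _ _
  -- identification of the integrals in the statement
  have hLHSint : ∫ x in Ω, |u x| ^ 2 / ‖x‖ ^ c = ∫ x, f x * G x := by
    rw [setIntegral_eq_integral_of_forall_compl_eq_zero (fun x hx => ?_)]
    · apply integral_congr_ae
      apply Filter.Eventually.of_forall
      intro x
      dsimp only
      by_cases hx : u x = 0
      · have hf : f x = 0 := by show u x * u x = 0; rw [hx, zero_mul]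
        rw [hf, zero_mul, hx]
        simp
      · have hx0 : x ≠ 0 := by
          intro h
          have := hout x hx
          rw [h] at this; simp only [norm_zero] at this; linarith
        have hχx : χ x = 1 := hχ1 x (by linarith [hout x hx])
        have hGx : G x = ‖x‖ ^ (-c) := by
          show χ x * w x = _
          rw [hχx, one_mul, hw_eq x hx0]
        rw [hGx, Real.rpow_neg (norm_nonneg x), div_eq_mul_inv]
        show |u x| ^ 2 * (‖x‖ ^ c)⁻¹ = u x * u x * (‖x‖ ^ c)⁻¹
        rw [sq_abs, sq]
    · have hux : u x = 0 := hu0 x (fun h => hx (hsupp h).1)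
      rw [hux]
      simp
  have hRHSint : ∫ x in Ω, |u x| / ‖x‖ ^ a = ∫ x, |u x| * Ga x := by
    rw [setIntegral_eq_integral_of_forall_compl_eq_zero (fun x hx => ?_)]
    · apply integral_congr_ae
      apply Filter.Eventually.of_forall
      intro x
      dsimp only
      by_cases hx : u x = 0
      · rw [hx]; simp
      · have hx0 : x ≠ 0 := by
          intro h
          have := hout x hx
          rw [h] at this; simp only [norm_zero] at this; linarith
        have hχx : χ x = 1 := hχ1 x (by linarith [hout x hx])
        have hGax : Ga x = ‖x‖ ^ (-a) := by
          show χ x * wa x = _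
          rw [hχx, one_mul, hwa_eq x hx0]
        rw [hGax, Real.rpow_neg (norm_nonneg x), div_eq_mul_inv]
    · have hux : u x = 0 := hu0 x (fun h => hx (hsupp h).1)
      rw [hux]
      simp
  rw [hLHSint, hRHSint]
  have habs : |((n : ℝ) - a - b - 1) / 2| = |(n : ℝ) - c| / 2 := by
    rw [show ((n : ℝ) - a - b - 1) = (n : ℝ) - c by rw [hcdef]; ring, abs_div, abs_two]
  rw [habs]
  nlinarith [hIneq]
end

section
/- Let n ≥ 1 and let b ∈ ℝ with n ≠ 2(b + 1). Then for every u ∈ C_c^∞(ℝⁿ \ {0}), ∫_{ℝⁿ} |u(x)|² / |x|^{2(b+1)} dx ≤ (n/2 − (b+1))^{-2} · ∫_{ℝⁿ} |∇u(x)|² / |x|^{2b} dx. -/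
open MeasureTheory Real Set Filter Topology
open scoped ContDiff


lemma hw_integrable {n : ℕ} {s : Set (EuclideanSpace ℝ (Fin n))}
    (hs : IsCompact s) (h0 : (0 : EuclideanSpace ℝ (Fin n)) ∉ s)
    {c : EuclideanSpace ℝ (Fin n) → ℝ} (hc : Continuous c)
    (hc0 : ∀ x, x ∉ s → c x = 0) (r : ℝ) :
    Integrable (fun x : EuclideanSpace ℝ (Fin n) => c x * ‖x‖ ^ r) := by
  have hclosed := hs.isClosed
  have hcont : Continuous fun x : EuclideanSpace ℝ (Fin n) => c x * ‖x‖ ^ r := by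
    rw [continuous_iff_continuousAt]
    intro x
    by_cases hx : x ∈ s
    · have hx0 : ‖x‖ ≠ 0 := by
        simp only [norm_ne_zero_iff]
        rintro rfl; exact h0 hx
      exact hc.continuousAt.mul
        ((Real.continuousAt_rpow_const _ _ (Or.inl hx0)).comp continuous_norm.continuousAt)
    · have hev : ∀ᶠ y in 𝓝 x, c y * ‖y‖ ^ r = 0 := by
        filter_upwards [hclosed.isOpen_compl.mem_nhds hx] with y hy
        simp [hc0 y hy]
      exact continuousAt_const.congr (hev.mono fun y hy => hy.symm)
  apply hcont.integrable_of_hasCompactSupport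
  apply HasCompactSupport.intro hs
  intro x hx; simp [hc0 x hx]

lemma hw_cutoff {n : ℕ} {ε R : ℝ} (hε : 0 < ε) (hεR : ε < R) :
    ∃ χ : EuclideanSpace ℝ (Fin n) → ℝ, ContDiff ℝ ∞ χ ∧
      (∀ x, ε ≤ ‖x‖ → ‖x‖ ≤ R → χ x = 1) ∧
      (∀ x, ‖x‖ ≤ ε/4 → χ x = 0) ∧
      (∀ x, R + ε ≤ ‖x‖ → χ x = 0) ∧
      (∀ x, 0 ≤ χ x) ∧ (∀ x, χ x ≤ 1) := by
  set c : ℝ := (ε/2 + R)/2 with hc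
  have hrIn : (0:ℝ) < (R - ε/2)/2 := by linarith
  have hrOut : (R - ε/2)/2 < R/2 := by linarith
  let φ : ContDiffBump c := ⟨(R - ε/2)/2, R/2, hrIn, hrOut⟩
  refine ⟨fun x => φ ‖x‖, ?_, ?_, ?_, ?_, ?_, ?_⟩
  · rw [contDiff_iff_contDiffAt]
    intro x
    by_cases hx : x = (0 : EuclideanSpace ℝ (Fin n))
    · subst hx
      have hev : (fun y : EuclideanSpace ℝ (Fin n) => φ ‖y‖) =ᶠ[𝓝 0] fun _ => 0 := by
        filter_upwards [Metric.ball_mem_nhds (0 : EuclideanSpace ℝ (Fin n)) (by positivity :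
          (0:ℝ) < ε/4)] with y hy
        apply φ.zero_of_le_dist
        rw [mem_ball_zero_iff] at hy
        rw [Real.dist_eq, abs_sub_comm, abs_of_nonneg (by simp only [c]; linarith)]
        simp only [c]
        linarith [show φ.rOut = R/2 from rfl, show φ.rIn = (R - ε/2)/2 from rfl]
      exact contDiffAt_const.congr_of_eventuallyEq hev
    · exact (φ.contDiff (n := (⊤ : ℕ∞))).contDiffAt.comp x (contDiffAt_norm ℝ hx)
  · intro x h1 h2
    apply φ.one_of_mem_closedBall
    rw [Metric.mem_closedBall, Real.dist_eq, abs_le]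
    constructor <;> simp only [c] <;> linarith [show φ.rOut = R/2 from rfl, show φ.rIn = (R - ε/2)/2 from rfl]
  · intro x h
    apply φ.zero_of_le_dist
    rw [Real.dist_eq, abs_sub_comm, abs_of_nonneg (by simp only [c]; linarith)]
    simp only [c]; linarith [show φ.rOut = R/2 from rfl, show φ.rIn = (R - ε/2)/2 from rfl]
  · intro x h
    apply φ.zero_of_le_dist
    rw [Real.dist_eq, abs_of_nonneg (by simp only [c]; linarith)]
    simp only [c]; linarith [show φ.rOut = R/2 from rfl, show φ.rIn = (R - ε/2)/2 from rfl]
  · intro x; exact φ.nonneg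
  · intro x; exact φ.le_one


set_option maxHeartbeats 2000000 in
theorem hardy_weighted_euclidean
    (n : ℕ) (hn : 1 ≤ n) (b : ℝ) (hnb : (n : ℝ) ≠ 2 * (b + 1))
    (u : EuclideanSpace ℝ (Fin n) → ℝ)
    (hu : ContDiff ℝ (⊤ : ℕ∞) u) (hcpt : HasCompactSupport u)
    (hsupp : tsupport u ⊆ {0}ᶜ) :
    ∫ x : EuclideanSpace ℝ (Fin n), |u x| ^ 2 / ‖x‖ ^ (2 * (b + 1)) ≤
      (((n : ℝ) / 2 - (b + 1)) ^ 2)⁻¹ *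
        ∫ x : EuclideanSpace ℝ (Fin n), ‖gradient u x‖ ^ 2 / ‖x‖ ^ (2 * b) := by
  classical
  have hu' : ContDiff ℝ ∞ u := hu.of_le (by simp)
  have hone : (∞ : WithTop ℕ∞) ≠ 0 := by simp
  set s := tsupport u with hs_def
  have hs : IsCompact s := hcpt
  have h0s : (0 : EuclideanSpace ℝ (Fin n)) ∉ s := fun h => (hsupp h) rfl
  have hu0 : ∀ x, x ∉ s → u x = 0 := fun x hx => image_eq_zero_of_notMem_tsupport hx
  have hdu0 : ∀ x, x ∉ s → fderiv ℝ u x = 0 := by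
    intro x hx
    by_contra h
    exact hx (support_fderiv_subset (𝕜 := ℝ) (f := u) h)
  -- radii
  obtain ⟨ε, hε, hεball⟩ := Metric.isOpen_iff.1 hs.isClosed.isOpen_compl 0 h0s
  have hεs : ∀ x ∈ s, ε ≤ ‖x‖ := by
    intro x hx
    by_contra h
    push_neg at h
    exact hεball (by simpa [mem_ball_zero_iff] using h) hx
  obtain ⟨R0, hR0⟩ := hs.isBounded.subset_closedBall 0
  set R : ℝ := max R0 ε + 1 with hR_def
  have hεR2 : ε/2 < R + 1 := by
    have : ε ≤ max R0 ε := le_max_right _ _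
    simp only [hR_def]; linarith
  have hRs : ∀ x ∈ s, ‖x‖ ≤ R := by
    intro x hx
    have h1 := hR0 hx
    rw [Metric.mem_closedBall, dist_zero_right] at h1
    have : R0 ≤ max R0 ε := le_max_left _ _
    simp only [hR_def]; linarith
  obtain ⟨χ, hχsm, hχ1, hχ0, hχbig, hχnn, hχle1⟩ :=
    hw_cutoff (n := n) (ε := ε/2) (R := R + 1) (by linarith) hεR2
  -- the open plateau zone
  set O : Set (EuclideanSpace ℝ (Fin n)) := (fun x => ‖x‖) ⁻¹' Ioo (ε/2) (R+1) with hO_def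
  have hOopen : IsOpen O := isOpen_Ioo.preimage continuous_norm
  have hsO : s ⊆ O := by
    intro x hx
    simp only [hO_def, mem_preimage, mem_Ioo]
    exact ⟨lt_of_lt_of_le (by linarith) (hεs x hx), lt_of_le_of_lt (hRs x hx) (by linarith)⟩
  have hχO : ∀ y ∈ O, χ y = 1 := by
    intro y hy
    simp only [hO_def, mem_preimage, mem_Ioo] at hy
    exact hχ1 y hy.1.le hy.2.le
  -- main objects
  set Q : EuclideanSpace ℝ (Fin n) → ℝ := fun y => (‖y‖^2 : ℝ) ^ (-(b+1)) with hQdef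
  set g : EuclideanSpace ℝ (Fin n) → ℝ := fun x => u x * u x with hgdef
  set F : Fin n → EuclideanSpace ℝ (Fin n) → ℝ := fun i x => (χ x * Q x) * x i with hFdef
  set e : Fin n → EuclideanSpace ℝ (Fin n) := fun i => EuclideanSpace.single i (1:ℝ) with hedef
  have hproj : ∀ i, ContDiff ℝ ∞ (fun y : EuclideanSpace ℝ (Fin n) => y i) := by
    intro i
    simpa using (EuclideanSpace.proj (𝕜 := ℝ) i :
      EuclideanSpace ℝ (Fin n) →L[ℝ] ℝ).contDiff (n := ∞)
  have hQeq : ∀ x : EuclideanSpace ℝ (Fin n), Q x = (‖x‖ ^ (2*(b+1)))⁻¹ := by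
    intro x
    simp only [hQdef]
    rw [← Real.rpow_natCast ‖x‖ 2, ← Real.rpow_mul (norm_nonneg x),
      show ((2:ℕ):ℝ) * (-(b+1)) = -(2*(b+1)) by push_cast; ring,
      Real.rpow_neg (norm_nonneg x)]
  have hQat : ∀ x : EuclideanSpace ℝ (Fin n), x ≠ 0 → ContDiffAt ℝ ∞ Q x := by
    intro x hx
    have h2 : (‖x‖^2 : ℝ) ≠ 0 := by
      have := norm_pos_iff.2 hx; positivity
    exact (Real.contDiffAt_rpow_const_of_ne h2).comp x ((contDiff_norm_sq ℝ).contDiffAt)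
  have hQ' : ∀ x : EuclideanSpace ℝ (Fin n), x ≠ 0 →
      HasFDerivAt Q (((-(b+1)) * (‖x‖^2 : ℝ) ^ (-(b+1) - 1)) • (2 • innerSL ℝ x)) x := by
    intro x hx
    have h2 : (0:ℝ) < ‖x‖^2 := by
      have := norm_pos_iff.2 hx; positivity
    exact (Real.hasDerivAt_rpow_const (p := -(b+1)) (Or.inl h2.ne')).comp_hasFDerivAt x
      (hasStrictFDerivAt_norm_sq x).hasFDerivAt
  have hsum : ∀ (L : EuclideanSpace ℝ (Fin n) →L[ℝ] ℝ) (y : EuclideanSpace ℝ (Fin n)),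
      ∑ i, y i * L (e i) = L y := by
    intro L y
    have h : ∑ i, y i • e i = y := by
      have := (EuclideanSpace.basisFun (Fin n) ℝ).sum_repr y
      simpa [hedef, EuclideanSpace.basisFun_apply, EuclideanSpace.basisFun_repr] using this
    conv_rhs => rw [← h]
    rw [map_sum]
    simp [smul_eq_mul]
  -- smoothness and support of F i
  have hFsm : ∀ i, ContDiff ℝ ∞ (F i) := by
    intro i
    rw [contDiff_iff_contDiffAt]
    intro x
    by_cases hx : x = 0
    · subst hx
      have hev : F i =ᶠ[𝓝 0] fun _ => 0 := by
        filter_upwards [Metric.ball_mem_nhds (0 : EuclideanSpace ℝ (Fin n))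
          (by positivity : (0:ℝ) < ε/2/4)] with y hy
        rw [mem_ball_zero_iff] at hy
        simp [hFdef, hχ0 y hy.le]
      exact contDiffAt_const.congr_of_eventuallyEq hev
    · exact ((hχsm.contDiffAt.mul (hQat x hx)).mul (hproj i).contDiffAt)
  have hFzero : ∀ i x, R + 1 + ε/2 ≤ ‖x‖ → F i x = 0 := by
    intro i x hx
    simp [hFdef, hχbig x hx]
  have hFsupp : ∀ i, HasCompactSupport (F i) := by
    intro i
    apply HasCompactSupport.intro (isCompact_closedBall (0 : EuclideanSpace ℝ (Fin n)) (R+1+ε/2))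
    intro x hx
    rw [Metric.mem_closedBall, dist_zero_right, not_le] at hx
    exact hFzero i x hx.le
  have hgsm : ContDiff ℝ ∞ g := hu'.mul hu'
  have hgsupp : HasCompactSupport g := by
    apply HasCompactSupport.intro hs
    intro x hx
    simp [hgdef, hu0 x hx]
  -- pointwise identity P1
  have P1 : ∀ x : EuclideanSpace ℝ (Fin n),
      ((n:ℝ) - 2*(b+1)) * (|u x| ^ 2 / ‖x‖ ^ (2*(b+1))) =
        ∑ i, fderiv ℝ (F i) x (e i) * g x := by
    intro x
    by_cases hux : u x = 0
    · simp [hgdef, hux]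
    · have hxs : x ∈ s := subset_tsupport u hux
      have hx0 : x ≠ 0 := fun h => h0s (h ▸ hxs)
      have hxnorm : (0:ℝ) < ‖x‖ := norm_pos_iff.2 hx0
      have h2pos : (0:ℝ) < ‖x‖^2 := by positivity
      have hFev : ∀ i, fderiv ℝ (F i) x = fderiv ℝ (fun y => Q y * y i) x := by
        intro i
        apply Filter.EventuallyEq.fderiv_eq
        filter_upwards [hOopen.mem_nhds (hsO hxs)] with y hy
        simp [hFdef, hχO y hy]
      have hQx := hQ' x hx0
      have hVal : ∀ i, fderiv ℝ (F i) x (e i) = Q x + x i *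
          ((((-(b+1)) * (‖x‖^2 : ℝ) ^ (-(b+1) - 1)) • (2 • innerSL ℝ x)) (e i)) := by
        intro i
        rw [hFev i]
        have hVi : HasFDerivAt (fun y : EuclideanSpace ℝ (Fin n) => Q y * y i)
            (Q x • (EuclideanSpace.proj i) + x i •
              (((-(b+1)) * (‖x‖^2 : ℝ) ^ (-(b+1) - 1)) • (2 • innerSL ℝ x))) x := by
          have hpi : HasFDerivAt (fun y : EuclideanSpace ℝ (Fin n) => y i)
              (EuclideanSpace.proj (𝕜 := ℝ) i) x := by
            simpa using (EuclideanSpace.proj (𝕜 := ℝ) i :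
              EuclideanSpace ℝ (Fin n) →L[ℝ] ℝ).hasFDerivAt (x := x)
          exact hQx.mul hpi
        rw [hVi.fderiv]
        simp only [ContinuousLinearMap.add_apply, ContinuousLinearMap.smul_apply, smul_eq_mul]
        have : (EuclideanSpace.proj (𝕜 := ℝ) i) (e i) = 1 := by
          simp [hedef, EuclideanSpace.single_apply]
        rw [this]
        ring
      have hkey : ∑ i, fderiv ℝ (F i) x (e i) = ((n:ℝ) - 2*(b+1)) * Q x := by
        rw [Finset.sum_congr rfl fun i _ => hVal i]
        rw [Finset.sum_add_distrib, Finset.sum_const, Finset.card_univ, Fintype.card_fin,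
          hsum (((-(b+1)) * (‖x‖^2 : ℝ) ^ (-(b+1) - 1)) • (2 • innerSL ℝ x)) x]
        simp only [ContinuousLinearMap.smul_apply, smul_eq_mul, innerSL_apply_apply,
          nsmul_eq_mul]
        rw [real_inner_self_eq_norm_sq x]
        have hrw : (‖x‖^2 : ℝ) ^ (-(b+1) - 1) * (2 * ‖x‖^2) =
            2 * (‖x‖^2 : ℝ) ^ (-(b+1)) := by
          rw [show (-(b+1) : ℝ) = (-(b+1) - 1) + 1 by ring, Real.rpow_add h2pos,
            Real.rpow_one]
          ring
        have hrw2 : (‖x‖^2 : ℝ) ^ (-(b+1) - 1) * (‖x‖^2 : ℝ) =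
            (‖x‖^2 : ℝ) ^ (-(b+1)) := by
          have h := Real.rpow_add_one (ne_of_gt h2pos) (-(b+1) - 1)
          rw [show (-(b+1) - 1 + 1 : ℝ) = -(b+1) by ring] at h
          exact h.symm
        push_cast
        simp only [hQdef]
        linear_combination (-2*(b+1)) * hrw2
      rw [← Finset.sum_mul, hkey]
      have habs : |u x| ^ 2 = g x := by
        simp only [hgdef]
        rw [sq_abs]; ring
      rw [habs, div_eq_mul_inv, ← hQeq x]
      ring
  -- pointwise identity P2
  have P2 : ∀ x : EuclideanSpace ℝ (Fin n),
      ∑ i, fderiv ℝ g x (-(e i)) * F i x =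
        -(2 * u x * fderiv ℝ u x x / ‖x‖ ^ (2*(b+1))) := by
    intro x
    have hud : DifferentiableAt ℝ u x := (hu'.differentiable hone).differentiableAt
    have hdg : fderiv ℝ g x = u x • fderiv ℝ u x + u x • fderiv ℝ u x := by
      simp only [hgdef]
      exact fderiv_mul hud hud
    have step : ∑ i, fderiv ℝ g x (-(e i)) * F i x
        = -((χ x * Q x) * fderiv ℝ g x x) := by
      rw [← hsum (fderiv ℝ g x) x]
      rw [Finset.mul_sum, ← Finset.sum_neg_distrib]
      apply Finset.sum_congr rfl
      intro i _
      rw [map_neg]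
      simp only [hFdef]
      ring
    rw [step, hdg]
    simp only [ContinuousLinearMap.add_apply, ContinuousLinearMap.smul_apply, smul_eq_mul]
    by_cases hux : u x = 0
    · simp [hux]
    · have hxs : x ∈ s := subset_tsupport u hux
      have hχx : χ x = 1 := hχO x (hsO hxs)
      rw [hχx, hQeq x]
      rw [div_eq_mul_inv]
      ring
  -- integrability
  have habs_cont : Continuous fun x => |u x| ^ 2 := (hu.continuous.abs).pow 2
  have hA_int : Integrable (fun x : EuclideanSpace ℝ (Fin n) =>
      |u x| ^ 2 / ‖x‖ ^ (2*(b+1))) := by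
    have hrw : (fun x : EuclideanSpace ℝ (Fin n) => |u x| ^ 2 / ‖x‖ ^ (2*(b+1))) =
        fun x => |u x| ^ 2 * ‖x‖ ^ (-(2*(b+1))) := by
      funext x
      rw [Real.rpow_neg (norm_nonneg x), div_eq_mul_inv]
    rw [hrw]
    exact hw_integrable hs h0s habs_cont (fun x hx => by simp [hu0 x hx]) _
  have hgradc : Continuous fun x => gradient u x := by
    have h1 : Continuous fun x : EuclideanSpace ℝ (Fin n) => fderiv ℝ u x :=
      hu.continuous_fderiv (by simp)
    exact ((InnerProductSpace.toDual ℝ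
      (EuclideanSpace ℝ (Fin n))).symm.continuous.comp h1 : _)
  have hgrad0 : ∀ x, x ∉ s → gradient u x = 0 := by
    intro x hx
    show (InnerProductSpace.toDual ℝ (EuclideanSpace ℝ (Fin n))).symm (fderiv ℝ u x) = 0
    rw [hdu0 x hx]
    simp
  have hgradnorm : ∀ x, ‖fderiv ℝ u x‖ = ‖gradient u x‖ := by
    intro x
    show _ = ‖(InnerProductSpace.toDual ℝ (EuclideanSpace ℝ (Fin n))).symm (fderiv ℝ u x)‖
    rw [LinearIsometryEquiv.norm_map]
  have hB_int : Integrable (fun x : EuclideanSpace ℝ (Fin n) =>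
      ‖gradient u x‖ ^ 2 / ‖x‖ ^ (2*b)) := by
    have hrw : (fun x : EuclideanSpace ℝ (Fin n) => ‖gradient u x‖ ^ 2 / ‖x‖ ^ (2*b)) =
        fun x => ‖gradient u x‖ ^ 2 * ‖x‖ ^ (-(2*b)) := by
      funext x
      rw [Real.rpow_neg (norm_nonneg x), div_eq_mul_inv]
    rw [hrw]
    exact hw_integrable hs h0s ((hgradc.norm).pow 2)
      (fun x hx => by simp [hgrad0 x hx]) _
  have hInt1 : ∀ i, Integrable (fun x => fderiv ℝ (F i) x (e i) * g x) := by
    intro i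
    apply Continuous.integrable_of_hasCompactSupport
    · exact (((hFsm i).continuous_fderiv hone).clm_apply continuous_const).mul
        hgsm.continuous
    · apply HasCompactSupport.intro hs
      intro x hx
      simp [hgdef, hu0 x hx]
  have hInt2 : ∀ i, Integrable (fun x => fderiv ℝ g x (-(e i)) * F i x) := by
    intro i
    apply Continuous.integrable_of_hasCompactSupport
    · exact ((hgsm.continuous_fderiv hone).clm_apply continuous_const).mul
        (hFsm i).continuous
    · apply HasCompactSupport.intro (isCompact_closedBall
        (0 : EuclideanSpace ℝ (Fin n)) (R+1+ε/2))
      intro x hx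
      rw [Metric.mem_closedBall, dist_zero_right, not_le] at hx
      rw [hFzero i x hx.le]
      ring
  -- integration by parts
  have hIBP : ∀ i, ∫ x, fderiv ℝ (F i) x (e i) * g x = ∫ x, fderiv ℝ g x (-(e i)) * F i x := by
    intro i
    obtain ⟨C, hC⟩ := ContDiff.lipschitzWith_of_hasCompactSupport (hFsupp i) (hFsm i) hone
    obtain ⟨D, hD⟩ := ContDiff.lipschitzWith_of_hasCompactSupport hgsupp hgsm hone
    have h := LipschitzWith.integral_lineDeriv_mul_eq (μ := volume) hC hD hgsupp (e i)
    have e1 : (fun x => lineDeriv ℝ (F i) x (e i) * g x) =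
        fun x => fderiv ℝ (F i) x (e i) * g x := by
      funext x
      rw [((hFsm i).differentiable hone).differentiableAt.lineDeriv_eq_fderiv]
    have e2 : (fun x => lineDeriv ℝ g x (-(e i)) * F i x) =
        fun x => fderiv ℝ g x (-(e i)) * F i x := by
      funext x
      rw [(hgsm.differentiable hone).differentiableAt.lineDeriv_eq_fderiv]
    rw [e1, e2] at h
    exact h
  -- the key identity
  have key : ((n:ℝ) - 2*(b+1)) * (∫ x : EuclideanSpace ℝ (Fin n),
      |u x| ^ 2 / ‖x‖ ^ (2*(b+1))) =
      - ∫ x : EuclideanSpace ℝ (Fin n), 2 * u x * fderiv ℝ u x x / ‖x‖ ^ (2*(b+1)) := by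
    calc ((n:ℝ) - 2*(b+1)) * (∫ x : EuclideanSpace ℝ (Fin n), |u x| ^ 2 / ‖x‖ ^ (2*(b+1)))
        = ∫ x : EuclideanSpace ℝ (Fin n),
            ((n:ℝ) - 2*(b+1)) * (|u x| ^ 2 / ‖x‖ ^ (2*(b+1))) :=
          (integral_const_mul _ _).symm
      _ = ∫ x : EuclideanSpace ℝ (Fin n), ∑ i, fderiv ℝ (F i) x (e i) * g x :=
          integral_congr_ae (Filter.Eventually.of_forall fun x => P1 x)
      _ = ∑ i, ∫ x, fderiv ℝ (F i) x (e i) * g x :=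
          integral_finset_sum Finset.univ (fun i _ => hInt1 i)
      _ = ∑ i, ∫ x, fderiv ℝ g x (-(e i)) * F i x :=
          Finset.sum_congr rfl fun i _ => hIBP i
      _ = ∫ x : EuclideanSpace ℝ (Fin n), ∑ i, fderiv ℝ g x (-(e i)) * F i x :=
          (integral_finset_sum Finset.univ (fun i _ => hInt2 i)).symm
      _ = ∫ x : EuclideanSpace ℝ (Fin n),
            -(2 * u x * fderiv ℝ u x x / ‖x‖ ^ (2*(b+1))) :=
          integral_congr_ae (Filter.Eventually.of_forall fun x => P2 x)
      _ = - ∫ x : EuclideanSpace ℝ (Fin n), 2 * u x * fderiv ℝ u x x / ‖x‖ ^ (2*(b+1)) :=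
          integral_neg _
  have hterm1 : ∀ x : EuclideanSpace ℝ (Fin n), 0 ≤ |u x| ^ 2 / ‖x‖ ^ (2*(b+1)) :=
    fun x => div_nonneg (pow_nonneg (abs_nonneg _) 2) (Real.rpow_nonneg (norm_nonneg _) _)
  have hterm2 : ∀ x : EuclideanSpace ℝ (Fin n), 0 ≤ ‖gradient u x‖ ^ 2 / ‖x‖ ^ (2*b) :=
    fun x => div_nonneg (pow_nonneg (norm_nonneg _) 2) (Real.rpow_nonneg (norm_nonneg _) _)
  -- the pointwise bound
  set m : ℝ := |(n:ℝ) - 2*(b+1)| with hm_def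
  have hm : 0 < m := abs_pos.2 (sub_ne_zero.2 hnb)
  have hbound : ∀ x : EuclideanSpace ℝ (Fin n),
      |2 * u x * fderiv ℝ u x x / ‖x‖ ^ (2*(b+1))| ≤
        m/2 * (|u x| ^ 2 / ‖x‖ ^ (2*(b+1))) + 2/m * (‖gradient u x‖ ^ 2 / ‖x‖ ^ (2*b)) := by
    intro x
    by_cases hux : u x = 0
    · simp only [hux, mul_zero, zero_mul, zero_div, abs_zero]
      have c1 : (0:ℝ) ≤ m/2 := by linarith
      have c2 : (0:ℝ) ≤ 2/m := div_nonneg (by norm_num) hm.le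
      exact add_nonneg
        (mul_nonneg c1 (div_nonneg (pow_nonneg le_rfl 2) (Real.rpow_nonneg (norm_nonneg _) _)))
        (mul_nonneg c2 (div_nonneg (pow_nonneg (norm_nonneg _) 2)
          (Real.rpow_nonneg (norm_nonneg _) _)))
    · have hxs : x ∈ s := subset_tsupport u hux
      have hx0 : x ≠ 0 := fun h => h0s (h ▸ hxs)
      have hxnorm : (0:ℝ) < ‖x‖ := norm_pos_iff.2 hx0
      have hP : (0:ℝ) < ‖x‖ ^ (2*(b+1)) := Real.rpow_pos_of_pos hxnorm _
      have hPb : (0:ℝ) < ‖x‖ ^ (2*b) := Real.rpow_pos_of_pos hxnorm _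
      have hPP : ‖x‖ ^ (2*(b+1)) = ‖x‖ ^ (2*b) * ‖x‖^2 := by
        have h2 : ‖x‖ ^ (((2:ℕ)):ℝ) = ‖x‖^(2:ℕ) := Real.rpow_natCast _ 2
        rw [show (2*(b+1) : ℝ) = 2*b + ((2:ℕ):ℝ) by push_cast; ring,
          Real.rpow_add hxnorm, h2]
      have hop : |fderiv ℝ u x x| ≤ ‖gradient u x‖ * ‖x‖ := by
        have h1 := (fderiv ℝ u x).le_opNorm x
        rw [Real.norm_eq_abs] at h1
        calc |fderiv ℝ u x x| ≤ ‖fderiv ℝ u x‖ * ‖x‖ := h1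
          _ = ‖gradient u x‖ * ‖x‖ := by rw [hgradnorm x]
      set G : ℝ := ‖gradient u x‖ with hG_def
      set a : ℝ := |u x| with ha_def
      have h1 : |2 * u x * fderiv ℝ u x x / ‖x‖ ^ (2*(b+1))| =
          2 * a * |fderiv ℝ u x x| / ‖x‖ ^ (2*(b+1)) := by
        rw [abs_div, abs_of_pos hP, abs_mul, abs_mul]
        norm_num
        rfl
      rw [h1]
      have h2 : 2 * a * |fderiv ℝ u x x| / ‖x‖ ^ (2*(b+1)) ≤
          2 * a * (G * ‖x‖) / ‖x‖ ^ (2*(b+1)) := by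
        gcongr
      refine le_trans h2 ?_
      have hG2 : G ^ 2 / ‖x‖ ^ (2*b) = G^2 * ‖x‖^2 / ‖x‖ ^ (2*(b+1)) := by
        rw [hPP]
        exact ((div_eq_div_iff hPb.ne' (mul_pos hPb (pow_pos hxnorm 2)).ne').2 (by ring))
      have ha2 : |u x| ^ 2 = a ^ 2 := rfl
      rw [hG2, ha2]
      rw [← mul_div_assoc, ← mul_div_assoc, ← add_div, div_le_div_iff₀ hP hP]
      have hnum : 2 * a * (G * ‖x‖) * ‖x‖ ^ (2*(b+1)) ≤
          (m/2 * a^2 + 2/m * (G^2 * ‖x‖^2)) * ‖x‖ ^ (2*(b+1)) := by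
        have expand : m/2 * a^2 + 2/m * (G^2 * ‖x‖^2) - 2*a*(G*‖x‖) =
            (m*a - 2*(G*‖x‖))^2 / (2*m) := by
          field_simp [hm.ne']
          ring
        have hnn : (0:ℝ) ≤ (m*a - 2*(G*‖x‖))^2 / (2*m) :=
          div_nonneg (sq_nonneg _) (by linarith)
        nlinarith [hP]
      exact hnum
  -- assemble
  set A : ℝ := ∫ x : EuclideanSpace ℝ (Fin n), |u x| ^ 2 / ‖x‖ ^ (2*(b+1)) with hA_def
  set B : ℝ := ∫ x : EuclideanSpace ℝ (Fin n), ‖gradient u x‖ ^ 2 / ‖x‖ ^ (2*b) with hB_def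
  have hA_nonneg : 0 ≤ A := integral_nonneg fun x => hterm1 x
  have hB_nonneg : 0 ≤ B := integral_nonneg fun x => hterm2 x
  have hmain : m * A ≤ m/2 * A + 2/m * B := by
    have hLHS : m * A = |((n:ℝ) - 2*(b+1)) * A| := by
      rw [abs_mul, abs_of_nonneg hA_nonneg]
    have hJ : |((n:ℝ) - 2*(b+1)) * A| =
        |∫ x : EuclideanSpace ℝ (Fin n), 2 * u x * fderiv ℝ u x x / ‖x‖ ^ (2*(b+1))| := by
      rw [hA_def, key, abs_neg]
    have hstep : |∫ x : EuclideanSpace ℝ (Fin n),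
        2 * u x * fderiv ℝ u x x / ‖x‖ ^ (2*(b+1))| ≤ m/2 * A + 2/m * B := by
      have h1 : |∫ x : EuclideanSpace ℝ (Fin n),
          2 * u x * fderiv ℝ u x x / ‖x‖ ^ (2*(b+1))| ≤
          ∫ x : EuclideanSpace ℝ (Fin n),
            |2 * u x * fderiv ℝ u x x / ‖x‖ ^ (2*(b+1))| := by
        have h := norm_integral_le_integral_norm (μ := volume)
          (fun x : EuclideanSpace ℝ (Fin n) =>
            2 * u x * fderiv ℝ u x x / ‖x‖ ^ (2*(b+1)))
        simp only [Real.norm_eq_abs] at h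
        exact h
      have h2 : ∫ x : EuclideanSpace ℝ (Fin n),
          |2 * u x * fderiv ℝ u x x / ‖x‖ ^ (2*(b+1))| ≤
          ∫ x : EuclideanSpace ℝ (Fin n),
            (m/2 * (|u x| ^ 2 / ‖x‖ ^ (2*(b+1))) +
              2/m * (‖gradient u x‖ ^ 2 / ‖x‖ ^ (2*b))) := by
        apply integral_mono_of_nonneg
        · exact Filter.Eventually.of_forall fun x => abs_nonneg _
        · exact (hA_int.const_mul _).add (hB_int.const_mul _)
        · exact Filter.Eventually.of_forall fun x => hbound x
      have h3 : ∫ x : EuclideanSpace ℝ (Fin n),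
          (m/2 * (|u x| ^ 2 / ‖x‖ ^ (2*(b+1))) +
            2/m * (‖gradient u x‖ ^ 2 / ‖x‖ ^ (2*b))) = m/2 * A + 2/m * B := by
        rw [integral_add (hA_int.const_mul _) (hB_int.const_mul _),
          integral_const_mul, integral_const_mul]
      linarith
    linarith [hLHS, hJ, hstep]
  have hstep2 : m/2 * A ≤ 2/m * B := by linarith
  have hfin : A ≤ 4/m^2 * B := by
    have c2 : (0:ℝ) ≤ 2/m := div_nonneg (by norm_num) hm.le
    calc A = (2/m) * (m/2 * A) := by field_simp [hm.ne']
      _ ≤ (2/m) * (2/m * B) := mul_le_mul_of_nonneg_left hstep2 c2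
      _ = 4/m^2 * B := by field_simp [hm.ne']; ring
  have hconst : (((n:ℝ)/2 - (b+1))^2)⁻¹ = 4/m^2 := by
    have h1 : ((n:ℝ)/2 - (b+1))^2 = m^2/4 := by
      rw [hm_def, sq_abs]
      ring
    rw [h1, inv_div]
  rw [hconst]
  exact hfin
end

section
/- Let n ≥ 1 and let a ∈ ℝ with n ≠ 2(a + 1). Then for every u ∈ C_c^∞(ℝⁿ \ {0}), (∫_{ℝⁿ} |u(x)|² / |x|^{2(a+1)} dx)² ≤ (n/2 − (a+1))^{-2} · (∫_{ℝⁿ} |u(x)|² / |x|^{2a} dx) · (∫_{ℝⁿ} |∇u(x)|² / |x|^{2(a+1)} dx). -/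
open MeasureTheory Real

section CKNAux

variable {n : ℕ}

private lemma ckn_sum_single (x : EuclideanSpace ℝ (Fin n)) :
    ∑ i, x i • EuclideanSpace.single i (1:ℝ) = x := by
  have := (EuclideanSpace.basisFun (Fin n) ℝ).sum_repr x
  simpa [EuclideanSpace.basisFun_apply, EuclideanSpace.basisFun_repr] using this

private lemma ckn_clm_sum (L : EuclideanSpace ℝ (Fin n) →L[ℝ] ℝ) (x : EuclideanSpace ℝ (Fin n)) :
    ∑ i, x i * L (EuclideanSpace.single i (1:ℝ)) = L x := by
  have := congrArg L (ckn_sum_single x)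
  rw [map_sum] at this
  simpa [smul_eq_mul] using this

private lemma ckn_integrable_fderiv {F : EuclideanSpace ℝ (Fin n) → ℝ}
    (hF : ContDiff ℝ (⊤ : ℕ∞) F) (hc : HasCompactSupport F) (v : EuclideanSpace ℝ (Fin n)) :
    Integrable (fun x => fderiv ℝ F x v) := by
  apply Continuous.integrable_of_hasCompactSupport
  · exact (hF.continuous_fderiv (by simp)).clm_apply continuous_const
  · exact (hc.fderiv ℝ).comp_left (g := fun L : _ →L[ℝ] ℝ => L v) rfl

private lemma ckn_integral_fderiv_zero {F : EuclideanSpace ℝ (Fin n) → ℝ}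
    (hF : ContDiff ℝ (⊤ : ℕ∞) F) (hc : HasCompactSupport F) (v : EuclideanSpace ℝ (Fin n)) :
    ∫ x, fderiv ℝ F x v = 0 := by
  have h := integral_mul_fderiv_eq_neg_fderiv_mul_of_integrable
    (μ := (volume : Measure (EuclideanSpace ℝ (Fin n))))
    (f := fun _ => (1:ℝ)) (g := F) (v := v)
    ?_ ?_ ?_ (fun x _ => differentiableAt_const 1) (fun x _ => hF.differentiable (by simp) x)
  · simpa [fderiv_fun_const] using h
  · simp [fderiv_fun_const]
  · simpa using ckn_integrable_fderiv hF hc v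
  · simpa using hF.continuous.integrable_of_hasCompactSupport hc

/-- Continuity and compact support for functions vanishing near `0`,
continuous away from `0`, supported in the support of `u`. -/
private lemma ckn_cont_supp {u G : EuclideanSpace ℝ (Fin n) → ℝ}
    (hcpt : HasCompactSupport u) {ε : ℝ} (hε : 0 < ε)
    (hG0 : ∀ x : EuclideanSpace ℝ (Fin n), ‖x‖ < ε → G x = 0)
    (hGcont : ∀ x : EuclideanSpace ℝ (Fin n), x ≠ 0 → ContinuousAt G x)
    (hGsupp : Function.support G ⊆ tsupport u) :
    Continuous G ∧ HasCompactSupport G := by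
  constructor
  · rw [continuous_iff_continuousAt]
    intro x
    by_cases hx : ‖x‖ < ε
    · apply Filter.EventuallyEq.continuousAt (y := (0:ℝ))
      have hb : Metric.ball (0 : EuclideanSpace ℝ (Fin n)) ε ∈ nhds x :=
        Metric.isOpen_ball.mem_nhds (by simpa [Metric.mem_ball, dist_zero_right] using hx)
      filter_upwards [hb] with y hy
      exact hG0 y (by simpa [Metric.mem_ball, dist_zero_right] using hy)
    · refine hGcont x fun h0 => hx ?_
      rw [h0]; simpa using hε
  · exact IsCompact.of_isClosed_subset hcpt (isClosed_tsupport G)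
      (closure_minimal hGsupp (isClosed_tsupport u))

/-- Value of the derivative of the `i`-th component of the vector field, at `x ≠ 0`. -/
private lemma ckn_val {a : ℝ} {u : EuclideanSpace ℝ (Fin n) → ℝ} (hu : ContDiff ℝ (⊤ : ℕ∞) u)
    {x : EuclideanSpace ℝ (Fin n)} (hx0 : x ≠ 0) (i : Fin n) :
    fderiv ℝ (fun y : EuclideanSpace ℝ (Fin n) => u y * u y * y i * ((inner ℝ y y : ℝ) ^ (-(a+1)))) x
      (EuclideanSpace.single i (1:ℝ))
    = (u x * u x * x i) * ((-(a+1) * (inner ℝ x x : ℝ) ^ (-(a+1)-1)) * (2 * x i))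
      + ((inner ℝ x x : ℝ) ^ (-(a+1))) *
          ((u x * u x) * 1 + x i * (2 * u x * fderiv ℝ u x (EuclideanSpace.single i 1))) := by
  have hs : (0:ℝ) < inner ℝ x x := by
    rw [real_inner_self_eq_norm_sq]; exact pow_pos (norm_pos_iff.mpr hx0) 2
  have hux : HasFDerivAt u (fderiv ℝ u x) x := (hu.differentiable (by simp) x).hasFDerivAt
  have h1 : HasFDerivAt (fun y => u y * u y) (u x • fderiv ℝ u x + u x • fderiv ℝ u x) x :=
    hux.mul hux
  have h2 : HasFDerivAt (fun y : EuclideanSpace ℝ (Fin n) => (y i : ℝ))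
      (PiLp.proj 2 (fun _ : Fin n => ℝ) i : EuclideanSpace ℝ (Fin n) →L[ℝ] ℝ) x :=
    by exact (PiLp.proj 2 (fun _ : Fin n => ℝ) i : EuclideanSpace ℝ (Fin n) →L[ℝ] ℝ).hasFDerivAt
  have hinner : HasFDerivAt (fun y : EuclideanSpace ℝ (Fin n) => (inner ℝ y y : ℝ))
      ((fderivInnerCLM ℝ (x, x)).comp
        ((ContinuousLinearMap.id ℝ _).prod (ContinuousLinearMap.id ℝ _))) x :=
    (hasFDerivAt_id x).inner ℝ (hasFDerivAt_id x)
  have h3 : HasFDerivAt (fun y : EuclideanSpace ℝ (Fin n) => ((inner ℝ y y : ℝ) ^ (-(a+1))))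
      ((-(a+1) * (inner ℝ x x : ℝ) ^ (-(a+1)-1)) •
        ((fderivInnerCLM ℝ (x, x)).comp
          ((ContinuousLinearMap.id ℝ _).prod (ContinuousLinearMap.id ℝ _)))) x :=
    (Real.hasDerivAt_rpow_const (Or.inl hs.ne')).comp_hasFDerivAt
      (f := fun y : EuclideanSpace ℝ (Fin n) => (inner ℝ y y : ℝ)) x hinner
  have h4 := (h1.mul h2).mul h3
  rw [HasFDerivAt.fderiv (f := fun y : EuclideanSpace ℝ (Fin n) =>
    u y * u y * y i * ((inner ℝ y y : ℝ) ^ (-(a+1)))) h4]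
  simp only [ContinuousLinearMap.add_apply, ContinuousLinearMap.smul_apply,
    ContinuousLinearMap.comp_apply, ContinuousLinearMap.prod_apply, ContinuousLinearMap.coe_id',
    id_eq, fderivInnerCLM_apply, PiLp.proj_apply, smul_eq_mul, Pi.mul_apply,
    EuclideanSpace.single_apply, real_inner_comm]
  rw [EuclideanSpace.inner_single_right]
  simp only [RCLike.inner_apply, starRingEnd_apply, star_trivial, one_mul]
  simp only [if_pos trivial, mul_one]
  ring

/-- Smoothness of the components of the vector field. -/
private lemma ckn_smooth {a : ℝ} {u : EuclideanSpace ℝ (Fin n) → ℝ} (hu : ContDiff ℝ (⊤ : ℕ∞) u)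
    {ε : ℝ} (hε : 0 < ε) (hu0 : ∀ x : EuclideanSpace ℝ (Fin n), ‖x‖ < ε → u x = 0) (i : Fin n) :
    ContDiff ℝ (⊤ : ℕ∞)
      (fun y : EuclideanSpace ℝ (Fin n) => u y * u y * y i * ((inner ℝ y y : ℝ) ^ (-(a+1)))) := by
  rw [contDiff_iff_contDiffAt]
  intro x
  by_cases hx : ‖x‖ < ε
  · have hb : Metric.ball (0 : EuclideanSpace ℝ (Fin n)) ε ∈ nhds x :=
      Metric.isOpen_ball.mem_nhds (by simpa [Metric.mem_ball, dist_zero_right] using hx)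
    have hev : (fun y : EuclideanSpace ℝ (Fin n) =>
        u y * u y * y i * ((inner ℝ y y : ℝ) ^ (-(a+1)))) =ᶠ[nhds x] (fun _ => (0:ℝ)) := by
      filter_upwards [hb] with y hy
      rw [hu0 y (by simpa [Metric.mem_ball, dist_zero_right] using hy)]
      ring
    exact (contDiffAt_const (c := (0:ℝ))).congr_of_eventuallyEq hev
  · have hx0 : x ≠ 0 := fun h0 => hx (by rw [h0]; simpa using hε)
    have hs : (0:ℝ) < inner ℝ x x := by
      rw [real_inner_self_eq_norm_sq]; exact pow_pos (norm_pos_iff.mpr hx0) 2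
    have hproj : ContDiffAt ℝ (⊤ : ℕ∞) (fun y : EuclideanSpace ℝ (Fin n) => (y i : ℝ)) x := by
      exact (PiLp.proj 2 (fun _ : Fin n => ℝ) i :
        EuclideanSpace ℝ (Fin n) →L[ℝ] ℝ).contDiff.contDiffAt
    have hinner : ContDiffAt ℝ (⊤ : ℕ∞) (fun y : EuclideanSpace ℝ (Fin n) => (inner ℝ y y : ℝ)) x :=
      ((contDiff_id (𝕜 := ℝ) (E := EuclideanSpace ℝ (Fin n))).inner ℝ contDiff_id).contDiffAt
    have hw : ContDiffAt ℝ (⊤ : ℕ∞)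
        (fun y : EuclideanSpace ℝ (Fin n) => ((inner ℝ y y : ℝ) ^ (-(a+1)))) x :=
      ContDiffAt.comp (g := fun t : ℝ => t ^ (-(a+1)))
        (f := fun y : EuclideanSpace ℝ (Fin n) => (inner ℝ y y : ℝ)) x
        (Real.contDiffAt_rpow_const_of_ne hs.ne') hinner
    exact ((hu.contDiffAt.mul hu.contDiffAt).mul hproj).mul hw

/-- The pointwise divergence identity. -/
private lemma ckn_div {a : ℝ} {u : EuclideanSpace ℝ (Fin n) → ℝ} (hu : ContDiff ℝ (⊤ : ℕ∞) u)
    {ε : ℝ} (hε : 0 < ε) (hu0 : ∀ x : EuclideanSpace ℝ (Fin n), ‖x‖ < ε → u x = 0)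
    (x : EuclideanSpace ℝ (Fin n)) :
    ∑ i, fderiv ℝ
        (fun y : EuclideanSpace ℝ (Fin n) => u y * u y * y i * ((inner ℝ y y : ℝ) ^ (-(a+1)))) x
        (EuclideanSpace.single i (1:ℝ))
    = ((n:ℝ) - 2*(a+1)) * (u x * u x * ((inner ℝ x x : ℝ) ^ (-(a+1))))
      + 2 * (u x * fderiv ℝ u x x * ((inner ℝ x x : ℝ) ^ (-(a+1)))) := by
  rcases lt_or_ge ‖x‖ ε with hx | hx
  · have hb : Metric.ball (0 : EuclideanSpace ℝ (Fin n)) ε ∈ nhds x :=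
      Metric.isOpen_ball.mem_nhds (by simpa [Metric.mem_ball, dist_zero_right] using hx)
    have hux : u x = 0 := hu0 x hx
    have hFi : ∀ i : Fin n, fderiv ℝ
        (fun y : EuclideanSpace ℝ (Fin n) => u y * u y * y i * ((inner ℝ y y : ℝ) ^ (-(a+1)))) x
        = 0 := by
      intro i
      have hev : (fun y : EuclideanSpace ℝ (Fin n) =>
          u y * u y * y i * ((inner ℝ y y : ℝ) ^ (-(a+1)))) =ᶠ[nhds x] (fun _ => (0:ℝ)) := by
        filter_upwards [hb] with y hy
        rw [hu0 y (by simpa [Metric.mem_ball, dist_zero_right] using hy)]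
        ring
      rw [hev.fderiv_eq]
      exact fderiv_const_apply 0
    rw [Finset.sum_eq_zero (fun i _ => by
      rw [hFi i]; exact ContinuousLinearMap.zero_apply _), hux]
    ring
  · have hx0 : x ≠ 0 := fun h0 => hx.not_gt (by rw [h0]; simpa using hε)
    have hs : (0:ℝ) < inner ℝ x x := by
      rw [real_inner_self_eq_norm_sq]; exact pow_pos (norm_pos_iff.mpr hx0) 2
    have hsum1 : ∑ i, x i * x i = (inner ℝ x x : ℝ) := by
      rw [PiLp.inner_apply]
      simp [RCLike.inner_apply, sq]
    have hkey : (inner ℝ x x : ℝ) ^ (-(a+1)-1) * (inner ℝ x x : ℝ) = (inner ℝ x x : ℝ) ^ (-(a+1)) := by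
      rw [← Real.rpow_add_one hs.ne' (-(a+1)-1)]
      norm_num
    calc ∑ i, fderiv ℝ
          (fun y : EuclideanSpace ℝ (Fin n) => u y * u y * y i * ((inner ℝ y y : ℝ) ^ (-(a+1)))) x
          (EuclideanSpace.single i (1:ℝ))
        = ∑ i, ((u x * u x * (-(a+1) * (inner ℝ x x : ℝ) ^ (-(a+1)-1) * 2)) * (x i * x i)
            + ((inner ℝ x x : ℝ) ^ (-(a+1)) * (u x * u x))
            + (2 * u x * ((inner ℝ x x : ℝ) ^ (-(a+1)))) *
                (x i * fderiv ℝ u x (EuclideanSpace.single i (1:ℝ)))) := by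
          refine Finset.sum_congr rfl fun i _ => ?_
          rw [ckn_val hu hx0 i]; ring
      _ = ((n:ℝ) - 2*(a+1)) * (u x * u x * ((inner ℝ x x : ℝ) ^ (-(a+1))))
            + 2 * (u x * fderiv ℝ u x x * ((inner ℝ x x : ℝ) ^ (-(a+1)))) := by
          simp only [Finset.sum_add_distrib, ← Finset.mul_sum, Finset.sum_const,
            Finset.card_univ, Fintype.card_fin, nsmul_eq_mul, hsum1, ckn_clm_sum]
          linear_combination (-2*(a+1)*(u x * u x)) * hkey

private lemma ckn_rpow_sq_neg {r : ℝ} (hr : 0 ≤ r) (c : ℝ) :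
    ((r ^ 2 : ℝ)) ^ (-c) = (r ^ (2*c))⁻¹ := by
  rw [← Real.rpow_natCast r 2, ← Real.rpow_mul hr, ← Real.rpow_neg hr]
  congr 1
  push_cast
  ring

private lemma ckn_rpow_neg_sq {r : ℝ} (hr : 0 ≤ r) (c : ℝ) :
    ((r ^ (-c) : ℝ)) ^ 2 = (r ^ (2*c))⁻¹ := by
  rw [← Real.rpow_natCast (r ^ (-c)) 2, ← Real.rpow_mul hr, ← Real.rpow_neg hr]
  congr 1
  push_cast
  ring

end CKNAux

theorem ckn_euclidean_b_eq_a_add_one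
    (n : ℕ) (hn : 1 ≤ n) (a : ℝ) (hna : (n : ℝ) ≠ 2 * (a + 1))
    (u : EuclideanSpace ℝ (Fin n) → ℝ)
    (hu : ContDiff ℝ (⊤ : ℕ∞) u) (hcpt : HasCompactSupport u)
    (hsupp : tsupport u ⊆ {0}ᶜ) :
    (∫ x : EuclideanSpace ℝ (Fin n), |u x| ^ 2 / ‖x‖ ^ (2 * (a + 1))) ^ 2 ≤
      (((n : ℝ) / 2 - (a + 1)) ^ 2)⁻¹ *
        ((∫ x : EuclideanSpace ℝ (Fin n), |u x| ^ 2 / ‖x‖ ^ (2 * a)) *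
          ∫ x : EuclideanSpace ℝ (Fin n), ‖gradient u x‖ ^ 2 / ‖x‖ ^ (2 * (a + 1))) := by
  classical
  -- `u` vanishes on a ball around `0`
  obtain ⟨ε, hε, hball⟩ : ∃ ε > 0,
      Metric.ball (0 : EuclideanSpace ℝ (Fin n)) ε ⊆ (tsupport u)ᶜ := by
    have h0 : (0 : EuclideanSpace ℝ (Fin n)) ∈ (tsupport u)ᶜ := fun h => (hsupp h) rfl
    exact Metric.isOpen_iff.1 (isClosed_tsupport u).isOpen_compl 0 h0
  have hu0 : ∀ x : EuclideanSpace ℝ (Fin n), ‖x‖ < ε → u x = 0 := by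
    intro x hx
    exact image_eq_zero_of_notMem_tsupport
      (hball (by simpa [Metric.mem_ball, dist_zero_right] using hx))
  have hgrad0 : ∀ x : EuclideanSpace ℝ (Fin n), ‖x‖ < ε → fderiv ℝ u x = 0 := by
    intro x hx
    have hb : Metric.ball (0 : EuclideanSpace ℝ (Fin n)) ε ∈ nhds x :=
      Metric.isOpen_ball.mem_nhds (by simpa [Metric.mem_ball, dist_zero_right] using hx)
    have hev : u =ᶠ[nhds x] (fun _ => (0:ℝ)) := by
      filter_upwards [hb] with y hy
      exact hu0 y (by simpa [Metric.mem_ball, dist_zero_right] using hy)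
    rw [hev.fderiv_eq]
    exact fderiv_const_apply 0
  have hgradient0 : ∀ x : EuclideanSpace ℝ (Fin n), ‖x‖ < ε → gradient u x = 0 := by
    intro x hx
    simp [gradient, hgrad0 x hx]
  have hgradcont : Continuous (fun x : EuclideanSpace ℝ (Fin n) => gradient u x) := by
    simp only [gradient]
    exact (InnerProductSpace.toDual ℝ _).symm.continuous.comp (hu.continuous_fderiv (by simp))
  have hinner_pos : ∀ x : EuclideanSpace ℝ (Fin n), x ≠ 0 → (0:ℝ) < inner ℝ x x := by
    intro x hx
    rw [real_inner_self_eq_norm_sq]; exact pow_pos (norm_pos_iff.mpr hx) 2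
  have hinner_cont : Continuous (fun x : EuclideanSpace ℝ (Fin n) => (inner ℝ x x : ℝ)) :=
    continuous_inner.comp (continuous_id.prodMk continuous_id)
  -- the weight function and its continuity away from zero
  set w : EuclideanSpace ℝ (Fin n) → ℝ := fun x => (inner ℝ x x : ℝ) ^ (-(a+1)) with hw_def
  have hw_cont : ∀ x : EuclideanSpace ℝ (Fin n), x ≠ 0 → ContinuousAt w x := by
    intro x hx
    exact ContinuousAt.comp (x := x) (g := fun t : ℝ => t ^ (-(a+1)))
      (f := fun y : EuclideanSpace ℝ (Fin n) => (inner ℝ y y : ℝ))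
      (Real.continuousAt_rpow_const _ _ (Or.inl (hinner_pos x hx).ne'))
      hinner_cont.continuousAt
  have hnorm_rpow_cont : ∀ (c : ℝ) (x : EuclideanSpace ℝ (Fin n)), x ≠ 0 →
      ContinuousAt (fun y : EuclideanSpace ℝ (Fin n) => ‖y‖ ^ c) x := by
    intro c x hx
    exact (Real.continuousAt_rpow_const _ _ (Or.inl (norm_ne_zero_iff.2 hx))).comp
      continuous_norm.continuousAt
  -- the three basic integrands
  set g₁ : EuclideanSpace ℝ (Fin n) → ℝ := fun x => u x * u x * w x with hg₁_def
  set g₂ : EuclideanSpace ℝ (Fin n) → ℝ := fun x => u x * fderiv ℝ u x x * w x with hg₂_def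
  set p : EuclideanSpace ℝ (Fin n) → ℝ := fun x => |u x| * ‖x‖ ^ (-a) with hp_def
  set q : EuclideanSpace ℝ (Fin n) → ℝ := fun x => ‖gradient u x‖ * ‖x‖ ^ (-(a+1)) with hq_def
  have hgrad_ts : ∀ x : EuclideanSpace ℝ (Fin n), x ∉ tsupport u → gradient u x = 0 := by
    intro x hx
    have hev : u =ᶠ[nhds x] (fun _ => (0:ℝ)) := by
      filter_upwards [(isClosed_tsupport u).isOpen_compl.mem_nhds hx] with y hy
      exact image_eq_zero_of_notMem_tsupport hy
    simp [gradient, hev.fderiv_eq, fderiv_const_apply]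
  -- continuity and compact support
  have hg₁cs : Continuous g₁ ∧ HasCompactSupport g₁ := by
    refine ckn_cont_supp hcpt hε (fun x hx => by simp [hg₁_def, hu0 x hx]) ?_ ?_
    · intro x hx
      exact ((hu.continuous.continuousAt.mul hu.continuous.continuousAt).mul (hw_cont x hx))
    · intro x hx
      simp only [hg₁_def, Function.mem_support] at hx
      by_contra hts
      exact hx (by simp [image_eq_zero_of_notMem_tsupport hts])
  have hg₂cs : Continuous g₂ ∧ HasCompactSupport g₂ := by
    refine ckn_cont_supp hcpt hε (fun x hx => by simp [hg₂_def, hu0 x hx]) ?_ ?_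
    · intro x hx
      exact ((hu.continuous.continuousAt.mul
        (((hu.continuous_fderiv (by simp)).clm_apply continuous_id).continuousAt)).mul
          (hw_cont x hx))
    · intro x hx
      simp only [hg₂_def, Function.mem_support] at hx
      by_contra hts
      exact hx (by simp [image_eq_zero_of_notMem_tsupport hts])
  have hpcs : Continuous p ∧ HasCompactSupport p := by
    refine ckn_cont_supp hcpt hε (fun x hx => by simp [hp_def, hu0 x hx]) ?_ ?_
    · intro x hx
      exact (hu.continuous.abs.continuousAt.mul (hnorm_rpow_cont (-a) x hx))
    · intro x hx
      simp only [hp_def, Function.mem_support] at hx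
      by_contra hts
      exact hx (by simp [image_eq_zero_of_notMem_tsupport hts])
  have hqcs : Continuous q ∧ HasCompactSupport q := by
    refine ckn_cont_supp hcpt hε (fun x hx => by simp [hq_def, hgradient0 x hx]) ?_ ?_
    · intro x hx
      exact (hgradcont.norm.continuousAt.mul (hnorm_rpow_cont (-(a+1)) x hx))
    · intro x hx
      simp only [hq_def, Function.mem_support] at hx
      by_contra hts
      exact hx (by simp [hgrad_ts x hts])
  have hint_g₁ : Integrable g₁ := hg₁cs.1.integrable_of_hasCompactSupport hg₁cs.2
  have hint_g₂ : Integrable g₂ := hg₂cs.1.integrable_of_hasCompactSupport hg₂cs.2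
  -- the vector field components
  set F : Fin n → EuclideanSpace ℝ (Fin n) → ℝ := fun i y => u y * u y * y i * w y with hF_def
  have hFsm : ∀ i, ContDiff ℝ (⊤ : ℕ∞) (F i) := fun i => ckn_smooth hu hε hu0 i
  have hFc : ∀ i, HasCompactSupport (F i) := by
    intro i
    apply IsCompact.of_isClosed_subset hcpt (isClosed_tsupport _)
    apply closure_minimal _ (isClosed_tsupport u)
    intro x hx
    simp only [hF_def, Function.mem_support] at hx
    by_contra hts
    exact hx (by simp [image_eq_zero_of_notMem_tsupport hts])
  -- integration by parts: the integral of the divergence vanishes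
  have hzero : ∫ x : EuclideanSpace ℝ (Fin n),
      (((n:ℝ) - 2*(a+1)) * g₁ x + 2 * g₂ x) = 0 := by
    have hpt : ∀ x : EuclideanSpace ℝ (Fin n),
        ((n:ℝ) - 2*(a+1)) * g₁ x + 2 * g₂ x
          = ∑ i, fderiv ℝ (F i) x (EuclideanSpace.single i (1:ℝ)) := fun x =>
      (ckn_div hu hε hu0 x).symm
    rw [integral_congr_ae (Filter.Eventually.of_forall hpt)]
    rw [integral_finset_sum _ (fun i _ => ckn_integrable_fderiv (hFsm i) (hFc i) _)]
    exact Finset.sum_eq_zero fun i _ => ckn_integral_fderiv_zero (hFsm i) (hFc i) _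
  have hsplit : ((n:ℝ) - 2*(a+1)) * (∫ x, g₁ x) + 2 * (∫ x, g₂ x) = 0 := by
    rw [integral_add (hint_g₁.const_mul _) (hint_g₂.const_mul _)] at hzero
    simp only [integral_const_mul] at hzero
    exact hzero
  -- identification of the integrands
  have e₁ : ∫ x : EuclideanSpace ℝ (Fin n), |u x| ^ 2 / ‖x‖ ^ (2 * (a + 1)) = ∫ x, g₁ x := by
    apply integral_congr_ae
    filter_upwards with x
    rw [hg₁_def]
    simp only [hw_def]
    rw [real_inner_self_eq_norm_sq, ckn_rpow_sq_neg (norm_nonneg x) (a+1), sq_abs,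
      div_eq_mul_inv]
    ring
  have e₀ : ∫ x : EuclideanSpace ℝ (Fin n), |u x| ^ 2 / ‖x‖ ^ (2 * a) = ∫ x, p x ^ 2 := by
    apply integral_congr_ae
    filter_upwards with x
    rw [hp_def]
    simp only
    rw [mul_pow, ckn_rpow_neg_sq (norm_nonneg x) a, div_eq_mul_inv]
  have e₂ : ∫ x : EuclideanSpace ℝ (Fin n), ‖gradient u x‖ ^ 2 / ‖x‖ ^ (2 * (a + 1))
      = ∫ x, q x ^ 2 := by
    apply integral_congr_ae
    filter_upwards with x
    rw [hq_def]
    simp only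
    rw [mul_pow, ckn_rpow_neg_sq (norm_nonneg x) (a+1), div_eq_mul_inv]
  -- Cauchy-Schwarz
  have hp_nonneg : ∀ x : EuclideanSpace ℝ (Fin n), 0 ≤ p x := fun x =>
    mul_nonneg (abs_nonneg _) (Real.rpow_nonneg (norm_nonneg _) _)
  have hq_nonneg : ∀ x : EuclideanSpace ℝ (Fin n), 0 ≤ q x := fun x =>
    mul_nonneg (norm_nonneg _) (Real.rpow_nonneg (norm_nonneg _) _)
  have hconj : Real.HolderConjugate 2 2 := Real.HolderConjugate.two_two
  have hCS := integral_mul_le_Lp_mul_Lq_of_nonneg (μ := volume) hconj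
    (Filter.Eventually.of_forall hp_nonneg) (Filter.Eventually.of_forall hq_nonneg)
    (hpcs.1.memLp_of_hasCompactSupport hpcs.2) (hqcs.1.memLp_of_hasCompactSupport hqcs.2)
  simp_rw [Real.rpow_two] at hCS
  -- pointwise bound |g₂| ≤ p * q
  have hbound : ∀ x : EuclideanSpace ℝ (Fin n), |g₂ x| ≤ p x * q x := by
    intro x
    by_cases hx : x = 0
    · subst hx
      have hu00 : u 0 = 0 := hu0 0 (by simpa using hε)
      simp only [hg₂_def, hu00]
      simpa using mul_nonneg (hp_nonneg 0) (hq_nonneg 0)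
    · have hnx : (0:ℝ) < ‖x‖ := norm_pos_iff.2 hx
      have hw_eq : ‖x‖ * w x = ‖x‖ ^ (-a) * ‖x‖ ^ (-(a+1)) := by
        simp only [hw_def]
        rw [real_inner_self_eq_norm_sq, ← Real.rpow_natCast ‖x‖ 2, ← Real.rpow_mul hnx.le,
          ← Real.rpow_add hnx]
        rw [show ((-a) + -(a+1) : ℝ) = 1 + ((2:ℕ):ℝ) * -(a+1) by push_cast; ring,
          Real.rpow_add hnx, Real.rpow_one]
      have hfg : fderiv ℝ u x x = (inner ℝ (gradient u x) x : ℝ) := by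
        simp [gradient, InnerProductSpace.toDual_symm_apply]
      have hw_nonneg : 0 ≤ w x := by
        simp only [hw_def]
        exact Real.rpow_nonneg real_inner_self_nonneg _
      calc |g₂ x| = |u x| * |fderiv ℝ u x x| * w x := by
            simp only [hg₂_def]
            rw [abs_mul, abs_mul, abs_of_nonneg hw_nonneg]
        _ ≤ |u x| * (‖gradient u x‖ * ‖x‖) * w x := by
            apply mul_le_mul_of_nonneg_right _ hw_nonneg
            apply mul_le_mul_of_nonneg_left _ (abs_nonneg _)
            rw [hfg]
            exact abs_real_inner_le_norm _ _
        _ = (|u x| * ‖gradient u x‖) * (‖x‖ * w x) := by ring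
        _ = p x * q x := by
            rw [hw_eq, hp_def, hq_def]
            ring
  -- bounding the middle integral
  have hint_pq : Integrable (fun x => p x * q x) :=
    (hpcs.1.mul hqcs.1).integrable_of_hasCompactSupport (hpcs.2.mul_right)
  have hJ : |∫ x, g₂ x| ≤ ∫ x, p x * q x := by
    show ‖∫ x, g₂ x‖ ≤ _
    refine le_trans (norm_integral_le_integral_norm _) ?_
    refine integral_mono hint_g₂.norm hint_pq ?_
    intro x
    simpa using hbound x
  have hpq_nonneg : 0 ≤ ∫ x, p x * q x :=
    integral_nonneg fun x => mul_nonneg (hp_nonneg x) (hq_nonneg x)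
  have hI₀_nonneg : 0 ≤ ∫ x, p x ^ 2 := integral_nonneg fun x => sq_nonneg _
  have hI₂_nonneg : 0 ≤ ∫ x, q x ^ 2 := integral_nonneg fun x => sq_nonneg _
  have hhalf : ∀ A : ℝ, 0 ≤ A → (A ^ ((1:ℝ)/2)) ^ 2 = A := by
    intro A hA
    rw [← Real.rpow_natCast (A ^ ((1:ℝ)/2)) 2, ← Real.rpow_mul hA]
    norm_num
  have hJ2 : (∫ x, g₂ x) ^ 2 ≤ (∫ x, p x ^ 2) * (∫ x, q x ^ 2) := by
    have h1 : (∫ x, g₂ x) ^ 2 ≤ (∫ x, p x * q x) ^ 2 := by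
      rw [← sq_abs]
      exact pow_le_pow_left₀ (abs_nonneg _) hJ 2
    have h2 : (∫ x, p x * q x) ^ 2 ≤
        ((∫ x, p x ^ 2) ^ ((1:ℝ)/2) * (∫ x, q x ^ 2) ^ ((1:ℝ)/2)) ^ 2 :=
      pow_le_pow_left₀ hpq_nonneg hCS 2
    calc (∫ x, g₂ x) ^ 2 ≤ (∫ x, p x * q x) ^ 2 := h1
      _ ≤ ((∫ x, p x ^ 2) ^ ((1:ℝ)/2) * (∫ x, q x ^ 2) ^ ((1:ℝ)/2)) ^ 2 := h2
      _ = (∫ x, p x ^ 2) * (∫ x, q x ^ 2) := by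
          rw [mul_pow, hhalf _ hI₀_nonneg, hhalf _ hI₂_nonneg]
  -- final algebra
  rw [e₁, e₀, e₂]
  have hne : (n:ℝ) - 2*(a+1) ≠ 0 := sub_ne_zero.2 hna
  have hk2 : (0:ℝ) < ((n:ℝ) - 2*(a+1))^2 :=
    lt_of_le_of_ne (sq_nonneg _) (Ne.symm (pow_ne_zero 2 hne))
  have hEq : ((n:ℝ) - 2*(a+1)) * (∫ x, g₁ x) = -(2 * (∫ x, g₂ x)) := by linarith [hsplit]
  have h2 : (((n:ℝ) - 2*(a+1)))^2 * (∫ x, g₁ x)^2 = 4 * (∫ x, g₂ x)^2 := by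
    rw [← mul_pow, hEq]
    ring
  have hrw : (((n:ℝ)/2 - (a+1))^2)⁻¹ = 4 / ((n:ℝ) - 2*(a+1))^2 := by
    rw [show ((n:ℝ)/2 - (a+1)) = ((n:ℝ) - 2*(a+1))/2 by ring, div_pow, inv_div]
    norm_num
  rw [hrw, div_mul_eq_mul_div, le_div_iff₀ hk2]
  nlinarith [h2, hJ2]
end

section
/- Let n ≥ 1 and let b ∈ ℝ. Then for every u ∈ C_c^∞(ℝⁿ \ {0}), (∫_{ℝⁿ} |u(x)|² dx)² ≤ (4/n²) · (∫_{ℝⁿ} |x|^{2(b+1)} |u(x)|² dx) · (∫_{ℝⁿ} |∇u(x)|² / |x|^{2b} dx). -/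
open MeasureTheory Real

abbrev CknAuxSpace (n : ℕ) : Type := EuclideanSpace ℝ (Fin n)

theorem ckn_euclidean_a_eq_neg_b_sub_one
    (n : ℕ) (hn : 1 ≤ n) (b : ℝ)
    (u : EuclideanSpace ℝ (Fin n) → ℝ)
    (hu : ContDiff ℝ (⊤ : ℕ∞) u) (hcpt : HasCompactSupport u)
    (hsupp : tsupport u ⊆ {0}ᶜ) :
    (∫ x : EuclideanSpace ℝ (Fin n), |u x| ^ 2) ^ 2 ≤
      4 / (n : ℝ) ^ 2 *
        ((∫ x : EuclideanSpace ℝ (Fin n), ‖x‖ ^ (2 * (b + 1)) * |u x| ^ 2) *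
          ∫ x : EuclideanSpace ℝ (Fin n), ‖gradient u x‖ ^ 2 / ‖x‖ ^ (2 * b)) := by
  classical
  have hud : Differentiable ℝ u := hu.differentiable (by simp)
  have hcu : Continuous u := hu.continuous
  have hcont_fd : Continuous fun x : CknAuxSpace n => fderiv ℝ u x := hu.continuous_fderiv (by simp)
  -- eventual vanishing off the support
  have hev : ∀ x : CknAuxSpace n, x ∉ tsupport u → u =ᶠ[nhds x] fun _ => (0 : ℝ) := by
    intro x hx
    have hmem : (tsupport u)ᶜ ∈ nhds x := (isClosed_tsupport u).isOpen_compl.mem_nhds hx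
    exact Filter.eventuallyEq_of_mem hmem fun y hy => image_eq_zero_of_notMem_tsupport hy
  have hzu : ∀ x : CknAuxSpace n, x ∉ tsupport u → u x = 0 :=
    fun x hx => image_eq_zero_of_notMem_tsupport hx
  have hzfd : ∀ x : CknAuxSpace n, x ∉ tsupport u → fderiv ℝ u x = 0 := by
    intro x hx
    rw [(hev x hx).fderiv_eq]
    exact fderiv_const_apply 0
  have h0 : (0 : CknAuxSpace n) ∉ tsupport u := fun h => hsupp h rfl
  -- the square function
  set sq : CknAuxSpace n → ℝ := fun x => u x * u x with hsqdef
  have hsq_smooth : ContDiff ℝ (⊤ : ℕ∞) sq := hu.mul hu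
  have hsq_diff : Differentiable ℝ sq := hsq_smooth.differentiable (by simp)
  have hsq_cont : Continuous sq := hsq_smooth.continuous
  have hfdsq_cont : Continuous fun x : CknAuxSpace n => fderiv ℝ sq x := hsq_smooth.continuous_fderiv (by simp)
  have hzsq_fd : ∀ x : CknAuxSpace n, x ∉ tsupport u → fderiv ℝ sq x = 0 := by
    intro x hx
    have : sq =ᶠ[nhds x] fun _ => (0 : ℝ) * (0 : ℝ) := (hev x hx).mul (hev x hx)
    rw [this.fderiv_eq]
    exact fderiv_const_apply _
  -- integrability helper
  have hint : ∀ w : CknAuxSpace n → ℝ, Continuous w → (∀ x, x ∉ tsupport u → w x = 0) →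
      Integrable w (volume : Measure (CknAuxSpace n)) := fun w hw hw0 =>
    hw.integrable_of_hasCompactSupport (HasCompactSupport.intro hcpt hw0)
  -- the two weight functions
  set f : CknAuxSpace n → ℝ := fun x => ‖x‖ ^ (b + 1) * |u x| with hfdef
  set g : CknAuxSpace n → ℝ := fun x => ‖x‖ ^ (-b) * ‖fderiv ℝ u x‖ with hgdef
  have hf_nonneg : ∀ x, 0 ≤ f x := fun x =>
    mul_nonneg (rpow_nonneg (norm_nonneg _) _) (abs_nonneg _)
  have hg_nonneg : ∀ x, 0 ≤ g x := fun x =>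
    mul_nonneg (rpow_nonneg (norm_nonneg _) _) (norm_nonneg _)
  -- continuity of weighted functions
  have hconts : ∀ (c : ℝ) (v : CknAuxSpace n → ℝ), Continuous v → (∀ x, x ∉ tsupport u → v x = 0) →
      Continuous fun x : CknAuxSpace n => ‖x‖ ^ c * v x := by
    intro c v hv hv0
    rw [continuous_iff_continuousAt]
    intro x
    rcases eq_or_ne x 0 with rfl | hx
    · have hmem : (tsupport u)ᶜ ∈ nhds (0 : CknAuxSpace n) :=
        (isClosed_tsupport u).isOpen_compl.mem_nhds h0
      have hev' : (fun x : CknAuxSpace n => ‖x‖ ^ c * v x) =ᶠ[nhds (0 : CknAuxSpace n)] fun _ => (0 : ℝ) :=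
        Filter.eventuallyEq_of_mem hmem fun y hy => by simp [hv0 y hy]
      exact hev'.continuousAt
    · have h1 : ContinuousAt (fun x : CknAuxSpace n => ‖x‖ ^ c) x :=
        (Real.continuousAt_rpow_const ‖x‖ c (Or.inl (norm_ne_zero_iff.mpr hx))).comp
          continuous_norm.continuousAt
      exact h1.mul hv.continuousAt
  have hcont_f : Continuous f :=
    hconts (b + 1) (fun x => |u x|) (continuous_abs.comp hcu) fun x hx => by simp [hzu x hx]
  have hcont_g : Continuous g :=
    hconts (-b) (fun x => ‖fderiv ℝ u x‖) hcont_fd.norm fun x hx => by simp [hzfd x hx]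
  have hcs_f : HasCompactSupport f :=
    HasCompactSupport.intro hcpt fun x hx => by simp [hfdef, hzu x hx]
  have hcs_g : HasCompactSupport g :=
    HasCompactSupport.intro hcpt fun x hx => by simp [hgdef, hzfd x hx]
  -- integration by parts in each direction
  have key : ∀ i : Fin n, ∫ x : CknAuxSpace n, sq x =
      - ∫ x : CknAuxSpace n, fderiv ℝ sq x (EuclideanSpace.single i (1 : ℝ)) * x i := by
    intro i
    set v : CknAuxSpace n := EuclideanSpace.single i (1 : ℝ) with hv
    have hfd_proj : ∀ x : CknAuxSpace n, fderiv ℝ (fun y : CknAuxSpace n => y i) x = EuclideanSpace.proj (𝕜 := ℝ) i :=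
      fun x => (EuclideanSpace.proj (𝕜 := ℝ) i).fderiv
    have hproj_cont : Continuous fun x : CknAuxSpace n => x i := (EuclideanSpace.proj (𝕜 := ℝ) i).continuous
    have i1 : Integrable (fun x : CknAuxSpace n => fderiv ℝ sq x v * x i) (volume : Measure (CknAuxSpace n)) :=
      hint _ ((hfdsq_cont.clm_apply continuous_const).mul hproj_cont)
        fun x hx => by simp [hzsq_fd x hx]
    have i2 : Integrable (fun x : CknAuxSpace n => sq x * fderiv ℝ (fun y : CknAuxSpace n => y i) x v)
        (volume : Measure (CknAuxSpace n)) := by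
      simp only [hfd_proj]
      exact hint _ (hsq_cont.mul continuous_const) fun x hx => by simp [hsqdef, hzu x hx]
    have i3 : Integrable (fun x : CknAuxSpace n => sq x * x i) (volume : Measure (CknAuxSpace n)) :=
      hint _ (hsq_cont.mul hproj_cont) fun x hx => by simp [hsqdef, hzu x hx]
    have hgd : Differentiable ℝ fun y : CknAuxSpace n => y i :=
      (EuclideanSpace.proj (𝕜 := ℝ) i).differentiable
    have := integral_mul_fderiv_eq_neg_fderiv_mul_of_integrable i1 i2 i3 (fun x _ => hsq_diff x) (fun x _ => hgd x)
    simp only [hfd_proj] at this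
    have hv1 : (EuclideanSpace.proj (𝕜 := ℝ) i) v = 1 := by
      simp [hv, EuclideanSpace.single_apply]
    rw [hv1] at this
    simpa using this
  -- decompose L x in the orthonormal basis
  have hdecomp : ∀ (L : CknAuxSpace n →L[ℝ] ℝ) (x : CknAuxSpace n),
      ∑ i, L (EuclideanSpace.single i (1 : ℝ)) * x i = L x := by
    intro L x
    have hx : ∑ i, x i • EuclideanSpace.single i (1 : ℝ) = x := by
      ext j
      rw [WithLp.ofLp_sum, Finset.sum_apply]
      simp [EuclideanSpace.single_apply]
    calc ∑ i, L (EuclideanSpace.single i (1 : ℝ)) * x i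
        = ∑ i, L (x i • EuclideanSpace.single i (1 : ℝ)) := by
          refine Finset.sum_congr rfl fun i _ => ?_
          rw [L.map_smul, smul_eq_mul, mul_comm]
      _ = L (∑ i, x i • EuclideanSpace.single i (1 : ℝ)) := (map_sum L _ _).symm
      _ = L x := by rw [hx]
  -- the summed integration by parts identity
  have hsum : (n : ℝ) * ∫ x : CknAuxSpace n, sq x = ∫ x : CknAuxSpace n, -(fderiv ℝ sq x x) := by
    have hInt : ∀ i : Fin n,
        Integrable (fun x : CknAuxSpace n => fderiv ℝ sq x (EuclideanSpace.single i (1 : ℝ)) * x i)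
          (volume : Measure (CknAuxSpace n)) := fun i =>
      hint _ ((hfdsq_cont.clm_apply continuous_const).mul
        (EuclideanSpace.proj (𝕜 := ℝ) i).continuous) fun x hx => by simp [hzsq_fd x hx]
    calc (n : ℝ) * ∫ x : CknAuxSpace n, sq x
        = ∑ _i : Fin n, ∫ x : CknAuxSpace n, sq x := by
          rw [Finset.sum_const]
          simp [nsmul_eq_mul]
      _ = ∑ i : Fin n,
            - ∫ x : CknAuxSpace n, fderiv ℝ sq x (EuclideanSpace.single i (1 : ℝ)) * x i :=
          Finset.sum_congr rfl fun i _ => key i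
      _ = - ∑ i : Fin n,
            ∫ x : CknAuxSpace n, fderiv ℝ sq x (EuclideanSpace.single i (1 : ℝ)) * x i := by
          rw [Finset.sum_neg_distrib]
      _ = - ∫ x : CknAuxSpace n, ∑ i : Fin n,
            fderiv ℝ sq x (EuclideanSpace.single i (1 : ℝ)) * x i := by
          rw [integral_finset_sum _ fun i _ => hInt i]
      _ = ∫ x : CknAuxSpace n, -(fderiv ℝ sq x x) := by
          rw [← integral_neg]
          refine integral_congr_ae (Filter.Eventually.of_forall fun x => ?_)
          show -∑ i : Fin n, fderiv ℝ sq x (EuclideanSpace.single i (1 : ℝ)) * x i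
              = -(fderiv ℝ sq x x)
          rw [hdecomp (fderiv ℝ sq x) x]
  -- compute the derivative of sq
  have hfderiv_sq : ∀ x : CknAuxSpace n, fderiv ℝ sq x x = 2 * (u x * fderiv ℝ u x x) := by
    intro x
    have : fderiv ℝ sq x = u x • fderiv ℝ u x + u x • fderiv ℝ u x :=
      fderiv_mul (hud x) (hud x)
    rw [this]
    simp only [ContinuousLinearMap.add_apply, ContinuousLinearMap.coe_smul',
      Pi.smul_apply, smul_eq_mul]
    ring
  -- pointwise bound
  have hpt : ∀ x : CknAuxSpace n, -(fderiv ℝ sq x x) ≤ 2 * (f x * g x) := by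
    intro x
    by_cases hx : x ∈ tsupport u
    · have hxne : x ≠ 0 := fun h => hsupp hx (by rw [h]; rfl)
      have hnx : (0 : ℝ) < ‖x‖ := norm_pos_iff.mpr hxne
      have hL : |fderiv ℝ u x x| ≤ ‖fderiv ℝ u x‖ * ‖x‖ := (fderiv ℝ u x).le_opNorm x
      have hfg : f x * g x = ‖x‖ * (|u x| * ‖fderiv ℝ u x‖) := by
        have h1 : ‖x‖ ^ (b + 1) * ‖x‖ ^ (-b) = ‖x‖ := by
          rw [← Real.rpow_add hnx]
          norm_num
        calc f x * g x = (‖x‖ ^ (b + 1) * ‖x‖ ^ (-b)) * (|u x| * ‖fderiv ℝ u x‖) := by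
              simp only [hfdef, hgdef]; ring
          _ = ‖x‖ * (|u x| * ‖fderiv ℝ u x‖) := by rw [h1]
      calc -(fderiv ℝ sq x x) = -(2 * (u x * fderiv ℝ u x x)) := by rw [hfderiv_sq x]
        _ ≤ |2 * (u x * fderiv ℝ u x x)| := neg_le_abs _
        _ = 2 * (|u x| * |fderiv ℝ u x x|) := by
            rw [abs_mul, abs_mul]
            norm_num
        _ ≤ 2 * (|u x| * (‖fderiv ℝ u x‖ * ‖x‖)) := by
            have := mul_le_mul_of_nonneg_left hL (abs_nonneg (u x))
            linarith
        _ = 2 * (f x * g x) := by rw [hfg]; ring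
    · have h1 := hzsq_fd x hx
      have h2 : -(fderiv ℝ sq x x) = 0 := by simp [h1]
      rw [h2]
      have := mul_nonneg (hf_nonneg x) (hg_nonneg x)
      linarith
  -- integral comparison
  have hmain : (n : ℝ) * ∫ x : CknAuxSpace n, sq x ≤ 2 * ∫ x : CknAuxSpace n, f x * g x := by
    rw [hsum]
    have ileft : Integrable (fun x : CknAuxSpace n => -(fderiv ℝ sq x x)) (volume : Measure (CknAuxSpace n)) :=
      (hint _ (hfdsq_cont.clm_apply continuous_id) fun x hx => by simp [hzsq_fd x hx]).neg
    have iright : Integrable (fun x : CknAuxSpace n => f x * g x) (volume : Measure (CknAuxSpace n)) :=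
      hint _ (hcont_f.mul hcont_g) fun x hx => by simp [hfdef, hzu x hx]
    calc ∫ x : CknAuxSpace n, -(fderiv ℝ sq x x) ≤ ∫ x : CknAuxSpace n, 2 * (f x * g x) :=
          integral_mono ileft (iright.const_mul 2) hpt
      _ = 2 * ∫ x : CknAuxSpace n, f x * g x := integral_const_mul 2 _
  -- Hölder / Cauchy-Schwarz
  have hconj : Real.HolderConjugate 2 2 := Real.HolderConjugate.two_two
  have hmem_f : MemLp f (ENNReal.ofReal 2) (volume : Measure (CknAuxSpace n)) :=
    hcont_f.memLp_of_hasCompactSupport hcs_f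
  have hmem_g : MemLp g (ENNReal.ofReal 2) (volume : Measure (CknAuxSpace n)) :=
    hcont_g.memLp_of_hasCompactSupport hcs_g
  have holder : ∫ x : CknAuxSpace n, f x * g x ≤
      (∫ x : CknAuxSpace n, f x ^ (2 : ℝ)) ^ (1 / (2 : ℝ)) * (∫ x : CknAuxSpace n, g x ^ (2 : ℝ)) ^ (1 / (2 : ℝ)) :=
    integral_mul_le_Lp_mul_Lq_of_nonneg hconj (ae_of_all _ hf_nonneg) (ae_of_all _ hg_nonneg)
      hmem_f hmem_g
  -- identify the squared integrals
  have hA : ∫ x : CknAuxSpace n, f x ^ (2 : ℝ) = ∫ x : CknAuxSpace n, ‖x‖ ^ (2 * (b + 1)) * |u x| ^ 2 := by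
    refine integral_congr_ae (Filter.Eventually.of_forall fun x => ?_)
    beta_reduce
    have h2 : f x ^ (2 : ℝ) = f x ^ (2 : ℕ) := by
      rw [← Real.rpow_natCast (f x) 2]; norm_num
    rw [h2]
    have : (‖x‖ ^ (b + 1)) ^ (2 : ℕ) = ‖x‖ ^ (2 * (b + 1)) := by
      rw [← Real.rpow_natCast (‖x‖ ^ (b + 1)) 2, ← Real.rpow_mul (norm_nonneg x)]
      norm_num
      ring_nf
    simp only [hfdef]
    rw [mul_pow, this]
  have hgradnorm : ∀ x : CknAuxSpace n, ‖gradient u x‖ = ‖fderiv ℝ u x‖ := fun x => by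
    rw [gradient]
    exact LinearIsometryEquiv.norm_map _ _
  have hB : ∫ x : CknAuxSpace n, g x ^ (2 : ℝ) = ∫ x : CknAuxSpace n, ‖gradient u x‖ ^ 2 / ‖x‖ ^ (2 * b) := by
    refine integral_congr_ae (Filter.Eventually.of_forall fun x => ?_)
    beta_reduce
    have h2 : g x ^ (2 : ℝ) = g x ^ (2 : ℕ) := by
      rw [← Real.rpow_natCast (g x) 2]; norm_num
    rw [h2, hgradnorm x]
    rcases eq_or_ne x 0 with rfl | hx
    · have hfd0 : fderiv ℝ u (0 : CknAuxSpace n) = 0 := hzfd 0 h0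
      simp [hgdef, hfd0]
    · have hnx : (0 : ℝ) < ‖x‖ := norm_pos_iff.mpr hx
      have h1 : (‖x‖ ^ (-b)) ^ (2 : ℕ) = (‖x‖ ^ (2 * b))⁻¹ := by
        rw [← Real.rpow_natCast (‖x‖ ^ (-b)) 2, ← Real.rpow_mul (norm_nonneg x),
          ← Real.rpow_neg (norm_nonneg x)]
        norm_num
        ring_nf
      simp only [hgdef]
      rw [mul_pow, h1, div_eq_mul_inv, mul_comm]
  -- nonnegativity of the pieces
  have hI_nonneg : 0 ≤ ∫ x : CknAuxSpace n, sq x :=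
    integral_nonneg fun x => mul_self_nonneg (u x)
  have hA_nonneg : 0 ≤ ∫ x : CknAuxSpace n, f x ^ (2 : ℝ) :=
    integral_nonneg fun x => rpow_nonneg (hf_nonneg x) _
  have hB_nonneg : 0 ≤ ∫ x : CknAuxSpace n, g x ^ (2 : ℝ) :=
    integral_nonneg fun x => rpow_nonneg (hg_nonneg x) _
  -- put everything together
  set I := ∫ x : CknAuxSpace n, sq x with hI
  set A := ∫ x : CknAuxSpace n, f x ^ (2 : ℝ) with hAdef
  set B := ∫ x : CknAuxSpace n, g x ^ (2 : ℝ) with hBdef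
  have hnI : (n : ℝ) * I ≤ 2 * (A ^ (1 / (2 : ℝ)) * B ^ (1 / (2 : ℝ))) := by
    calc (n : ℝ) * I ≤ 2 * ∫ x : CknAuxSpace n, f x * g x := hmain
      _ ≤ 2 * (A ^ (1 / (2 : ℝ)) * B ^ (1 / (2 : ℝ))) := by
          have := holder
          linarith
  have hnI_nonneg : 0 ≤ (n : ℝ) * I := mul_nonneg (Nat.cast_nonneg n) hI_nonneg
  have hsq_le : ((n : ℝ) * I) ^ 2 ≤ 4 * (A * B) := by
    have h1 : ((n : ℝ) * I) ^ 2 ≤ (2 * (A ^ (1 / (2 : ℝ)) * B ^ (1 / (2 : ℝ)))) ^ 2 :=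
      pow_le_pow_left₀ hnI_nonneg hnI 2
    have hA2 : (A ^ (1 / (2 : ℝ))) ^ (2 : ℕ) = A := by
      rw [← Real.rpow_natCast (A ^ (1 / (2 : ℝ))) 2, ← Real.rpow_mul hA_nonneg]
      norm_num
    have hB2 : (B ^ (1 / (2 : ℝ))) ^ (2 : ℕ) = B := by
      rw [← Real.rpow_natCast (B ^ (1 / (2 : ℝ))) 2, ← Real.rpow_mul hB_nonneg]
      norm_num
    calc ((n : ℝ) * I) ^ 2 ≤ (2 * (A ^ (1 / (2 : ℝ)) * B ^ (1 / (2 : ℝ)))) ^ 2 := h1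
      _ = 4 * ((A ^ (1 / (2 : ℝ))) ^ (2 : ℕ) * (B ^ (1 / (2 : ℝ))) ^ (2 : ℕ)) := by ring
      _ = 4 * (A * B) := by rw [hA2, hB2]
  have hn0 : (0 : ℝ) < (n : ℝ) ^ 2 := by
    have : (0 : ℝ) < (n : ℝ) := by exact_mod_cast hn
    positivity
  have hfinal : I ^ 2 ≤ 4 / (n : ℝ) ^ 2 * (A * B) := by
    rw [div_mul_eq_mul_div, le_div_iff₀ hn0]
    nlinarith [hsq_le]
  have hIrw : (∫ x : CknAuxSpace n, |u x| ^ 2) = I := by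
    rw [hI]
    refine integral_congr_ae (Filter.Eventually.of_forall fun x => ?_)
    beta_reduce
    show |u x| ^ 2 = u x * u x
    rw [sq_abs, pow_two]
  rw [hIrw, ← hA, ← hB]
  exact hfinal
end

section
/- Let n ≥ 1 with n ≠ 1. Then for every u ∈ C_c^∞(ℝⁿ \ {0}), (∫_{ℝⁿ} |u(x)|² / |x| dx)² ≤ (4/(n − 1)²) · (∫_{ℝⁿ} |x|² |u(x)|² dx) · (∫_{ℝⁿ} |∇u(x)|² / |x|² dx). -/
open MeasureTheory Real

private lemma aux_int_fderiv {n : ℕ} (F : EuclideanSpace ℝ (Fin n) → ℝ)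
    (hF : ContDiff ℝ (⊤ : ℕ∞) F) (hc : HasCompactSupport F) (v : EuclideanSpace ℝ (Fin n)) :
    ∫ x, fderiv ℝ F x v = 0 := by
  obtain ⟨K, hK⟩ := ContDiff.lipschitzWith_of_hasCompactSupport hc hF (by simp)
  have h := LipschitzWith.integral_lineDeriv_mul_eq (μ := volume)
    (LipschitzWith.const' (1:ℝ) (K := 0)) hK hc (-v)
  have hl : ∀ (x w : EuclideanSpace ℝ (Fin n)),
      lineDeriv ℝ (fun _ : EuclideanSpace ℝ (Fin n) => (1:ℝ)) x w = 0 := fun x w => by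
    rw [(differentiableAt_const (1:ℝ)).lineDeriv_eq_fderiv, fderiv_fun_const]
    simp
  have h2 : ∀ x, lineDeriv ℝ F x (- -v) * 1 = fderiv ℝ F x v := fun x => by
    rw [neg_neg, mul_one]
    exact ((hF.differentiable (by simp)).differentiableAt).lineDeriv_eq_fderiv
  simp only [hl, h2, zero_mul, integral_zero] at h
  exact h.symm

private lemma aux_sum_single {n : ℕ} (x : EuclideanSpace ℝ (Fin n)) :
    ∑ i, x i • EuclideanSpace.single i (1:ℝ) = x := by
  have := (EuclideanSpace.basisFun (Fin n) ℝ).sum_repr x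
  simpa [EuclideanSpace.basisFun_apply, EuclideanSpace.basisFun_repr] using this

private lemma aux_fderiv_zero {n : ℕ} (f : EuclideanSpace ℝ (Fin n) → ℝ)
    (s : Set (EuclideanSpace ℝ (Fin n)))
    (hs : IsOpen s) (h0 : ∀ y ∈ s, f y = 0) {x} (hx : x ∈ s) : fderiv ℝ f x = 0 := by
  have : f =ᶠ[nhds x] (fun _ => 0) := Filter.eventually_of_mem (hs.mem_nhds hx) h0
  rw [this.fderiv_eq, fderiv_fun_const]
  rfl

theorem ckn_euclidean_a_neg_one_b_one
    (n : ℕ) (hn : 1 ≤ n) (hne : n ≠ 1)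
    (u : EuclideanSpace ℝ (Fin n) → ℝ)
    (hu : ContDiff ℝ (⊤ : ℕ∞) u) (hcpt : HasCompactSupport u)
    (hsupp : tsupport u ⊆ {0}ᶜ) :
    (∫ x : EuclideanSpace ℝ (Fin n), |u x| ^ 2 / ‖x‖) ^ 2 ≤
      4 / ((n : ℝ) - 1) ^ 2 *
        ((∫ x : EuclideanSpace ℝ (Fin n), ‖x‖ ^ 2 * |u x| ^ 2) *
          ∫ x : EuclideanSpace ℝ (Fin n), ‖gradient u x‖ ^ 2 / ‖x‖ ^ 2) := by
  classical
  have hUopen : IsOpen (tsupport u)ᶜ := (isClosed_tsupport u).isOpen_compl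
  have huz : ∀ y ∈ (tsupport u)ᶜ, u y = 0 := fun y hy => image_eq_zero_of_notMem_tsupport hy
  have h0mem : (0 : EuclideanSpace ℝ (Fin n)) ∈ (tsupport u)ᶜ := fun h => (hsupp h) rfl
  have hne0 : ∀ x ∈ tsupport u, x ≠ 0 := fun x hx => hsupp hx
  have hud : Differentiable ℝ u := hu.differentiable (by simp)
  -- the weighted function G
  set G : EuclideanSpace ℝ (Fin n) → ℝ := fun x => ‖x‖⁻¹ * (u x * u x) with hGdef
  have hGz : ∀ y ∈ (tsupport u)ᶜ, G y = 0 := fun y hy => by simp [hGdef, huz y hy]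
  have hGsm : ContDiff ℝ (⊤ : ℕ∞) G := by
    rw [contDiff_iff_contDiffAt]
    intro x
    by_cases hx : x ∈ tsupport u
    · have hx0 : x ≠ 0 := hne0 x hx
      have h1 : ContDiffAt ℝ (⊤ : ℕ∞) (fun y : EuclideanSpace ℝ (Fin n) => ‖y‖) x :=
        contDiffAt_norm ℝ hx0
      exact (h1.inv (norm_ne_zero_iff.mpr hx0)).mul (hu.contDiffAt.mul hu.contDiffAt)
    · have : G =ᶠ[nhds x] fun _ => 0 :=
        Filter.eventually_of_mem (hUopen.mem_nhds hx) hGz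
      exact contDiffAt_const.congr_of_eventuallyEq this
  have hGcs : HasCompactSupport G := HasCompactSupport.intro hcpt (fun x hx => hGz x hx)
  -- the vector field components
  set F : Fin n → EuclideanSpace ℝ (Fin n) → ℝ :=
    fun i x => EuclideanSpace.proj i x * G x with hFdef
  have hFsm : ∀ i, ContDiff ℝ (⊤ : ℕ∞) (F i) := fun i =>
    ((EuclideanSpace.proj (𝕜 := ℝ) i).contDiff).mul hGsm
  have hFz : ∀ i, ∀ y ∈ (tsupport u)ᶜ, F i y = 0 := fun i y hy => by
    simp [hFdef, hGz y hy]
  have hFcs : ∀ i, HasCompactSupport (F i) := fun i =>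
    HasCompactSupport.intro hcpt (fun x hx => hFz i x hx)
  -- divergence identity
  have hdiv : ∀ x, ∑ i, fderiv ℝ (F i) x (EuclideanSpace.single i (1:ℝ))
      = n * G x + fderiv ℝ G x x := by
    intro x
    have hGd : DifferentiableAt ℝ G x := (hGsm.differentiable (by simp)).differentiableAt
    have hderiv : ∀ i, fderiv ℝ (F i) x
        = EuclideanSpace.proj i x • fderiv ℝ G x + G x • (EuclideanSpace.proj (𝕜 := ℝ) i) := by
      intro i
      exact (((EuclideanSpace.proj (𝕜 := ℝ) i).hasFDerivAt).mul hGd.hasFDerivAt).fderiv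
    have hsum : ∑ i, x i * (fderiv ℝ G x) (EuclideanSpace.single i (1:ℝ)) = fderiv ℝ G x x := by
      calc ∑ i, x i * (fderiv ℝ G x) (EuclideanSpace.single i (1:ℝ))
          = ∑ i, (fderiv ℝ G x) (x i • EuclideanSpace.single i (1:ℝ)) := by
            simp [smul_eq_mul]
        _ = (fderiv ℝ G x) (∑ i, x i • EuclideanSpace.single i (1:ℝ)) :=
            (map_sum (fderiv ℝ G x) _ _).symm
        _ = fderiv ℝ G x x := by rw [aux_sum_single]
    simp only [hderiv, ContinuousLinearMap.add_apply, ContinuousLinearMap.smul_apply,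
      smul_eq_mul]
    rw [Finset.sum_add_distrib]
    have e1 : ∀ i : Fin n, (EuclideanSpace.proj (𝕜 := ℝ) i) x = x i := fun i => rfl
    have e2 : ∀ i : Fin n,
        (EuclideanSpace.proj (𝕜 := ℝ) i) (EuclideanSpace.single i (1:ℝ)) = 1 := fun i => by
      simp
    simp only [e1, e2, mul_one, hsum, Finset.sum_const, Finset.card_univ, Fintype.card_fin,
      nsmul_eq_mul]
    ring
  -- integral of divergence is zero
  have hintF : ∀ i, Integrable (fun x => fderiv ℝ (F i) x (EuclideanSpace.single i (1:ℝ))) := by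
    intro i
    apply Continuous.integrable_of_hasCompactSupport
    · exact (((hFsm i).continuous_fderiv (by simp)).clm_apply continuous_const)
    · apply HasCompactSupport.intro hcpt
      intro x hx
      rw [aux_fderiv_zero (F i) _ hUopen (hFz i) hx]
      rfl
  have hint0 : ∫ x, ((n : ℝ) * G x + fderiv ℝ G x x) = 0 := by
    have : ∀ x, (n : ℝ) * G x + fderiv ℝ G x x
        = ∑ i, fderiv ℝ (F i) x (EuclideanSpace.single i (1:ℝ)) := fun x => (hdiv x).symm
    simp_rw [this]
    rw [integral_finset_sum _ (fun i _ => hintF i)]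
    exact Finset.sum_eq_zero fun i _ => aux_int_fderiv (F i) (hFsm i) (hFcs i) _
  -- pointwise radial derivative
  set R : EuclideanSpace ℝ (Fin n) → ℝ :=
    fun x => 2 * u x * fderiv ℝ u x x * ‖x‖⁻¹ with hRdef
  have hRptwise : ∀ x, fderiv ℝ G x x = -G x + R x := by
    intro x
    by_cases hx : x ∈ tsupport u
    · have hx0 : x ≠ 0 := hne0 x hx
      have hxn : ‖x‖ ≠ 0 := norm_ne_zero_iff.mpr hx0
      have hnd : DifferentiableAt ℝ (fun y : EuclideanSpace ℝ (Fin n) => ‖y‖) x :=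
        (show ContDiffAt ℝ 1 (fun y : EuclideanSpace ℝ (Fin n) => ‖y‖) x from contDiffAt_norm ℝ hx0).differentiableAt one_ne_zero
      have hNx : fderiv ℝ (fun y : EuclideanSpace ℝ (Fin n) => ‖y‖) x x = ‖x‖ :=
        hnd.fderiv_norm_self
      have hinv : HasFDerivAt (fun y : EuclideanSpace ℝ (Fin n) => ‖y‖⁻¹)
          ((-(‖x‖^2)⁻¹) • fderiv ℝ (fun y : EuclideanSpace ℝ (Fin n) => ‖y‖) x) x := by
        exact (hasDerivAt_inv hxn).comp_hasFDerivAt x hnd.hasFDerivAt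
      have hU : HasFDerivAt u (fderiv ℝ u x) x := (hud x).hasFDerivAt
      have hG' : HasFDerivAt G
          (‖x‖⁻¹ • (u x • fderiv ℝ u x + u x • fderiv ℝ u x)
            + (u x * u x) • ((-(‖x‖^2)⁻¹) • fderiv ℝ (fun y : EuclideanSpace ℝ (Fin n) => ‖y‖) x)) x :=
        hinv.mul (hU.mul hU)
      rw [hG'.fderiv]
      simp only [ContinuousLinearMap.add_apply, ContinuousLinearMap.smul_apply,
        smul_eq_mul, hNx, hGdef, hRdef]
      field_simp
      ring
    · have hz : fderiv ℝ G x = 0 := aux_fderiv_zero G _ hUopen hGz hx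
      have hux : u x = 0 := image_eq_zero_of_notMem_tsupport hx
      rw [hz]
      simp [hGdef, hRdef, hux]
  -- continuity and integrability of R
  have hRz : ∀ y ∈ (tsupport u)ᶜ, R y = 0 := fun y hy => by simp [hRdef, huz y hy]
  have hRcont : Continuous R := by
    rw [continuous_iff_continuousAt]
    intro x
    by_cases hx0 : x = 0
    · subst hx0
      have : R =ᶠ[nhds (0 : EuclideanSpace ℝ (Fin n))] fun _ => 0 :=
        Filter.eventually_of_mem (hUopen.mem_nhds h0mem) hRz
      exact ContinuousAt.congr continuousAt_const this.symm
    · have h1 : ContinuousAt (fun y => 2 * u y * fderiv ℝ u y y) x :=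
        (((continuous_const.mul hu.continuous).mul
          ((hu.continuous_fderiv (by simp)).clm_apply continuous_id)).continuousAt)
      exact h1.mul ((continuous_norm.continuousAt).inv₀ (norm_ne_zero_iff.mpr hx0))
  have hRcs : HasCompactSupport R := HasCompactSupport.intro hcpt (fun x hx => hRz x hx)
  have hIntR : Integrable R := hRcont.integrable_of_hasCompactSupport hRcs
  have hIntG : Integrable G := hGsm.continuous.integrable_of_hasCompactSupport hGcs
  -- the key identity
  have key : ((n : ℝ) - 1) * ∫ x, G x = - ∫ x, R x := by
    have h2 : ∀ x, (n : ℝ) * G x + fderiv ℝ G x x = ((n : ℝ) - 1) * G x + R x := fun x => by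
      rw [hRptwise x]; ring
    simp_rw [h2] at hint0
    rw [integral_add (hIntG.const_mul _) hIntR, integral_const_mul] at hint0
    linarith
  -- Cauchy-Schwarz setup
  set a : EuclideanSpace ℝ (Fin n) → ℝ := fun x => ‖x‖ * |u x| with hadef
  set b : EuclideanSpace ℝ (Fin n) → ℝ := fun x => ‖fderiv ℝ u x‖ * ‖x‖⁻¹ with hbdef
  have ha_cont : Continuous a := continuous_norm.mul hu.continuous.abs
  have hbz : ∀ y ∈ (tsupport u)ᶜ, b y = 0 := fun y hy => by
    have : fderiv ℝ u y = 0 := aux_fderiv_zero u _ hUopen huz hy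
    simp [hbdef, this]
  have hb_cont : Continuous b := by
    rw [continuous_iff_continuousAt]
    intro x
    by_cases hx0 : x = 0
    · subst hx0
      have : b =ᶠ[nhds (0 : EuclideanSpace ℝ (Fin n))] fun _ => 0 :=
        Filter.eventually_of_mem (hUopen.mem_nhds h0mem) hbz
      exact ContinuousAt.congr continuousAt_const this.symm
    · exact ((hu.continuous_fderiv (by simp)).norm.continuousAt).mul
        ((continuous_norm.continuousAt).inv₀ (norm_ne_zero_iff.mpr hx0))
  have ha_cs : HasCompactSupport a := HasCompactSupport.intro hcpt
    (fun x hx => by simp [hadef, huz x hx])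
  have hb_cs : HasCompactSupport b := HasCompactSupport.intro hcpt (fun x hx => hbz x hx)
  have ha_mem : MemLp a (ENNReal.ofReal 2) := ha_cont.memLp_of_hasCompactSupport ha_cs
  have hb_mem : MemLp b (ENNReal.ofReal 2) := hb_cont.memLp_of_hasCompactSupport hb_cs
  have hpq : (2:ℝ).HolderConjugate 2 := by constructor <;> norm_num
  have holder := integral_mul_le_Lp_mul_Lq_of_nonneg hpq
    (Filter.Eventually.of_forall fun x => by positivity)
    (Filter.Eventually.of_forall fun x => by positivity) ha_mem hb_mem
  have hrpow : ∀ y : ℝ, y ^ (2:ℝ) = y ^ 2 := fun y => by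
    rw [show (2:ℝ) = ((2:ℕ):ℝ) by norm_num, Real.rpow_natCast]
  simp_rw [hrpow] at holder
  -- pointwise bound |R| ≤ 2 a b
  have hRbound : ∀ x, |R x| ≤ 2 * (a x * b x) := by
    intro x
    have h1 : |fderiv ℝ u x x| ≤ ‖fderiv ℝ u x‖ * ‖x‖ := (fderiv ℝ u x).le_opNorm x
    calc |R x| = 2 * |u x| * |fderiv ℝ u x x| * ‖x‖⁻¹ := by
          simp only [hRdef, abs_mul]
          rw [abs_of_nonneg (inv_nonneg.mpr (norm_nonneg x)), abs_of_nonneg (by norm_num : (0:ℝ) ≤ 2)]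
      _ ≤ 2 * |u x| * (‖fderiv ℝ u x‖ * ‖x‖) * ‖x‖⁻¹ := by
          gcongr
      _ = 2 * (a x * b x) := by simp only [hadef, hbdef]; ring
  -- integrability of a*b
  have hab_int : Integrable (fun x => a x * b x) :=
    (ha_cont.mul hb_cont).integrable_of_hasCompactSupport
      (HasCompactSupport.intro hcpt (fun x hx => by simp [hadef, huz x hx]))
  -- assemble inequality: (n-1) ∫ G ≤ 2 √(∫a²) √(∫b²)
  have hstep : ((n : ℝ) - 1) * ∫ x, G x ≤
      2 * ((∫ x, a x ^ 2) ^ ((1:ℝ)/2) * (∫ x, b x ^ 2) ^ ((1:ℝ)/2)) := by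
    rw [key]
    calc -∫ x, R x ≤ |∫ x, R x| := neg_le_abs _
      _ ≤ ∫ x, |R x| := by
          simpa [Real.norm_eq_abs] using norm_integral_le_integral_norm R
      _ ≤ ∫ x, 2 * (a x * b x) := by
          apply integral_mono hIntR.abs (hab_int.const_mul 2) hRbound
      _ = 2 * ∫ x, a x * b x := integral_const_mul 2 _
      _ ≤ 2 * ((∫ x, a x ^ 2) ^ ((1:ℝ)/2) * (∫ x, b x ^ 2) ^ ((1:ℝ)/2)) := by
          linarith [holder]
  -- rewrite the goal integrands
  have e1 : (fun x : EuclideanSpace ℝ (Fin n) => |u x| ^ 2 / ‖x‖) = G := funext fun x => by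
    simp only [hGdef]
    rw [sq_abs, pow_two, div_eq_mul_inv, mul_comm]
  have e2 : (fun x : EuclideanSpace ℝ (Fin n) => ‖x‖ ^ 2 * |u x| ^ 2)
      = fun x => a x ^ 2 := funext fun x => by
    simp only [hadef]; rw [mul_pow]
  have e3 : (fun x : EuclideanSpace ℝ (Fin n) => ‖gradient u x‖ ^ 2 / ‖x‖ ^ 2)
      = fun x => b x ^ 2 := funext fun x => by
    have hg : ‖gradient u x‖ = ‖fderiv ℝ u x‖ := by rw [gradient]; simp
    simp only [hbdef]
    rw [hg, mul_pow, inv_pow, div_eq_mul_inv]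
  rw [e1, e2, e3]
  have hA : 0 ≤ ∫ x, a x ^ 2 := integral_nonneg fun x => sq_nonneg _
  have hB : 0 ≤ ∫ x, b x ^ 2 := integral_nonneg fun x => sq_nonneg _
  have hI : 0 ≤ ∫ x, G x := integral_nonneg fun x =>
    mul_nonneg (inv_nonneg.mpr (norm_nonneg _)) (mul_self_nonneg _)
  have hn1 : (0:ℝ) < (n:ℝ) - 1 := by
    have h1n : (1:ℝ) < (n:ℝ) := by exact_mod_cast lt_of_le_of_ne hn (Ne.symm hne)
    linarith
  set A := ∫ x, a x ^ 2 with hAdef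
  set B := ∫ x, b x ^ 2 with hBdef
  set I := ∫ x, G x with hIdef
  have hI2 : I ≤ 2 * (A ^ ((1:ℝ)/2) * B ^ ((1:ℝ)/2)) / ((n:ℝ) - 1) := by
    rw [le_div_iff₀ hn1]
    linarith [hstep]
  have sqA : (A ^ ((1:ℝ)/2)) ^ 2 = A := by
    rw [← Real.rpow_natCast (A ^ ((1:ℝ)/2)) 2, ← Real.rpow_mul hA]
    norm_num
  have sqB : (B ^ ((1:ℝ)/2)) ^ 2 = B := by
    rw [← Real.rpow_natCast (B ^ ((1:ℝ)/2)) 2, ← Real.rpow_mul hB]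
    norm_num
  calc I ^ 2 ≤ (2 * (A ^ ((1:ℝ)/2) * B ^ ((1:ℝ)/2)) / ((n:ℝ) - 1)) ^ 2 :=
        pow_le_pow_left₀ hI hI2 2
    _ = 4 / ((n:ℝ) - 1) ^ 2 * (A * B) := by
        rw [div_pow, mul_pow, mul_pow, sqA, sqB]
        ring
end

section
/- Let n ≥ 2. Then for every u ∈ C_c^∞(ℝⁿ \ {0}), (∫_{ℝⁿ} |u(x)|² / |x| dx)² ≤ (4/(n − 1)²) · (∫_{ℝⁿ} |u(x)|² dx) · (∫_{ℝⁿ} |∇u(x)|² dx). -/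
open MeasureTheory Real

lemma aux_ibp {n : ℕ} (f : EuclideanSpace ℝ (Fin n) → ℝ) (hf : ContDiff ℝ (⊤ : ℕ∞) f)
    (hc : HasCompactSupport f) (y : EuclideanSpace ℝ (Fin n)) :
    ∫ x : EuclideanSpace ℝ (Fin n), fderiv ℝ f x y = 0 := by
  have hd : Differentiable ℝ f := hf.differentiable (by simp)
  have h1 : Integrable (fun x : EuclideanSpace ℝ (Fin n) => fderiv ℝ f x y) volume := by
    apply Continuous.integrable_of_hasCompactSupport
    · exact (hf.continuous_fderiv (by simp)).clm_apply continuous_const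
    · exact hc.fderiv_apply ℝ y
  have h3 : Integrable f volume := hf.continuous.integrable_of_hasCompactSupport hc
  have key := integral_mul_fderiv_eq_neg_fderiv_mul_of_integrable (μ := volume)
    (f := f) (g := fun _ => (1:ℝ)) (v := y)
    (by simpa using h1) (by simp) (by simpa using h3) (fun x _ => hd x) (fun x _ => differentiableAt_const (1:ℝ))
  simp only [fderiv_fun_const, fderiv_const, Pi.zero_apply, ContinuousLinearMap.zero_apply, mul_zero, mul_one,
    integral_zero] at key
  linarith [key, neg_eq_zero.mp key.symm]

lemma aux_norm_deriv {n : ℕ} {x : EuclideanSpace ℝ (Fin n)} (hx : x ≠ 0) :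
    HasFDerivAt (fun y : EuclideanSpace ℝ (Fin n) => ‖y‖) (‖x‖⁻¹ • innerSL ℝ x) x := by
  have hnx : ‖x‖ ≠ 0 := norm_ne_zero_iff.mpr hx
  have h1 : HasFDerivAt (fun y : EuclideanSpace ℝ (Fin n) => ‖y‖ ^ 2)
      (2 • innerSL ℝ x) x := hasStrictFDerivAt_norm_sq x |>.hasFDerivAt
  have h2 := (Real.hasDerivAt_sqrt (by positivity : ‖x‖ ^ 2 ≠ 0)).comp_hasFDerivAt x h1
  have h3 : HasFDerivAt (fun y : EuclideanSpace ℝ (Fin n) => ‖y‖)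
      ((1 / (2 * Real.sqrt (‖x‖ ^ 2))) • 2 • innerSL ℝ x) x := by
    apply h2.congr_of_eventuallyEq
    filter_upwards with y
    simp [Function.comp, Real.sqrt_sq (norm_nonneg y)]
  refine h3.congr_fderiv ?_
  rw [Real.sqrt_sq (norm_nonneg x)]
  ext y
  simp only [ContinuousLinearMap.smul_apply, smul_eq_mul, two_smul,
    ContinuousLinearMap.add_apply]
  field_simp
  ring

lemma aux_sum {n : ℕ} (u : EuclideanSpace ℝ (Fin n) → ℝ) (hu : ContDiff ℝ (⊤ : ℕ∞) u)
    {x : EuclideanSpace ℝ (Fin n)} (hx : x ≠ 0) :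
    ∑ i : Fin n, fderiv ℝ (fun y : EuclideanSpace ℝ (Fin n) => u y * u y * (‖y‖⁻¹ * y i)) x
        (EuclideanSpace.single i 1)
    = 2 * u x * fderiv ℝ u x x / ‖x‖ + ((n : ℝ) - 1) * (u x * u x / ‖x‖) := by
  have hnx : ‖x‖ ≠ 0 := norm_ne_zero_iff.mpr hx
  have hud : HasFDerivAt u (fderiv ℝ u x) x := (hu.differentiable (by simp) x).hasFDerivAt
  have hinv : HasFDerivAt (fun y : EuclideanSpace ℝ (Fin n) => ‖y‖⁻¹)
      ((-(‖x‖ ^ 2)⁻¹) • (‖x‖⁻¹ • innerSL ℝ x)) x :=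
    (hasDerivAt_inv hnx).comp_hasFDerivAt x (aux_norm_deriv hx)
  have hproj : ∀ i : Fin n, HasFDerivAt (fun y : EuclideanSpace ℝ (Fin n) => y i)
      (EuclideanSpace.proj i : EuclideanSpace ℝ (Fin n) →L[ℝ] ℝ) x :=
    fun i => by
      have h := (EuclideanSpace.proj i : EuclideanSpace ℝ (Fin n) →L[ℝ] ℝ).hasFDerivAt (x := x)
      apply h.congr_of_eventuallyEq
      filter_upwards with y
      simp [PiLp.proj_apply]
  have hq : ∀ i : Fin n,
      fderiv ℝ (fun y : EuclideanSpace ℝ (Fin n) => u y * u y * (‖y‖⁻¹ * y i)) x =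
        (u x * u x) • (‖x‖⁻¹ • (EuclideanSpace.proj i : EuclideanSpace ℝ (Fin n) →L[ℝ] ℝ)
            + (x i) • ((-(‖x‖ ^ 2)⁻¹) • (‖x‖⁻¹ • innerSL ℝ x)))
          + (‖x‖⁻¹ * x i) • ((u x) • fderiv ℝ u x + (u x) • fderiv ℝ u x) := by
    intro i
    exact ((hud.mul hud).mul ((hinv.mul (hproj i)))).fderiv
  have hsingle : ∀ i : Fin n, (innerSL ℝ x) (EuclideanSpace.single i (1:ℝ)) = x i := by
    intro i
    simp [EuclideanSpace.inner_single_right]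
  have hprojsingle : ∀ i : Fin n,
      (EuclideanSpace.proj i : EuclideanSpace ℝ (Fin n) →L[ℝ] ℝ)
        (EuclideanSpace.single i (1:ℝ)) = 1 := by
    intro i; simp [EuclideanSpace.single_apply]
  have hx_sum : ∑ i : Fin n, x i * (fderiv ℝ u x) (EuclideanSpace.single i (1:ℝ))
      = fderiv ℝ u x x := by
    have hxs : x = ∑ i : Fin n, (x i) • EuclideanSpace.single i (1:ℝ) := by
      ext j
      rw [WithLp.ofLp_sum, Finset.sum_apply]
      simp [EuclideanSpace.single_apply]
    have : (fderiv ℝ u x) x = (fderiv ℝ u x) (∑ i : Fin n, (x i) • EuclideanSpace.single i (1:ℝ)) := by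
      rw [← hxs]
    rw [this, map_sum]
    simp [mul_comm]
  have hxx_sum : ∑ i : Fin n, x i * x i = ‖x‖ ^ 2 := by
    rw [← real_inner_self_eq_norm_sq, PiLp.inner_apply]
    simp [RCLike.inner_apply, mul_comm, sq]
  simp only [hq, ContinuousLinearMap.add_apply, ContinuousLinearMap.smul_apply,
    smul_eq_mul, hsingle, hprojsingle]
  rw [Finset.sum_add_distrib]
  have e1 : ∑ i : Fin n, (u x * u x) * (‖x‖⁻¹ * 1 + x i * (-(‖x‖ ^ 2)⁻¹ * (‖x‖⁻¹ * x i)))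
      = ((n : ℝ) - 1) * (u x * u x / ‖x‖) := by
    simp only [← Finset.mul_sum]
    rw [Finset.sum_add_distrib]
    have : ∑ i : Fin n, x i * (-(‖x‖ ^ 2)⁻¹ * (‖x‖⁻¹ * x i))
        = -(‖x‖ ^ 2)⁻¹ * ‖x‖⁻¹ * ∑ i : Fin n, x i * x i := by
      rw [Finset.mul_sum]; congr 1; funext i; ring
    rw [this, hxx_sum]
    simp only [Finset.sum_const, Finset.card_univ, Fintype.card_fin, nsmul_eq_mul]
    field_simp
    ring
  have e2 : ∑ i : Fin n, (‖x‖⁻¹ * x i) *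
      (u x * (fderiv ℝ u x) (EuclideanSpace.single i (1:ℝ))
        + u x * (fderiv ℝ u x) (EuclideanSpace.single i (1:ℝ)))
      = 2 * u x * fderiv ℝ u x x / ‖x‖ := by
    have : ∀ i : Fin n, (‖x‖⁻¹ * x i) *
        (u x * (fderiv ℝ u x) (EuclideanSpace.single i (1:ℝ))
          + u x * (fderiv ℝ u x) (EuclideanSpace.single i (1:ℝ)))
        = (2 * u x * ‖x‖⁻¹) * (x i * (fderiv ℝ u x) (EuclideanSpace.single i (1:ℝ))) := by
      intro i; ring
    simp only [this, ← Finset.mul_sum, hx_sum]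
    field_simp
  rw [e1, e2]
  ring

theorem ckn_euclidean_a_zero_b_zero
    (n : ℕ) (hn : 2 ≤ n)
    (u : EuclideanSpace ℝ (Fin n) → ℝ)
    (hu : ContDiff ℝ (⊤ : ℕ∞) u) (hcpt : HasCompactSupport u)
    (hsupp : tsupport u ⊆ {0}ᶜ) :
    (∫ x : EuclideanSpace ℝ (Fin n), |u x| ^ 2 / ‖x‖) ^ 2 ≤
      4 / ((n : ℝ) - 1) ^ 2 *
        ((∫ x : EuclideanSpace ℝ (Fin n), |u x| ^ 2) *
          ∫ x : EuclideanSpace ℝ (Fin n), ‖gradient u x‖ ^ 2) := by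
  -- u vanishes near 0
  have h0 : (0 : EuclideanSpace ℝ (Fin n)) ∉ tsupport u := fun h => (hsupp h) rfl
  obtain ⟨ε, hε, hball⟩ : ∃ ε > 0, Metric.ball (0 : EuclideanSpace ℝ (Fin n)) ε ⊆
      (tsupport u)ᶜ := by
    have : (tsupport u)ᶜ ∈ nhds (0 : EuclideanSpace ℝ (Fin n)) :=
      (isClosed_tsupport u).isOpen_compl.mem_nhds h0
    simpa using Metric.mem_nhds_iff.1 this
  have huz : ∀ x : EuclideanSpace ℝ (Fin n), ‖x‖ < ε → u x = 0 := by
    intro x hx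
    exact image_eq_zero_of_notMem_tsupport (hball (by simpa [Metric.mem_ball] using hx))
  -- the component functions q i
  set q : Fin n → EuclideanSpace ℝ (Fin n) → ℝ :=
    fun i y => u y * u y * (‖y‖⁻¹ * y i) with hq_def
  have hq_smooth : ∀ i, ContDiff ℝ (⊤ : ℕ∞) (q i) := by
    intro i
    rw [contDiff_iff_contDiffAt]
    intro x
    by_cases hx : x = 0
    · subst hx
      have hb : Metric.ball (0 : EuclideanSpace ℝ (Fin n)) ε ∈
          nhds (0 : EuclideanSpace ℝ (Fin n)) := Metric.ball_mem_nhds _ hε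
      have : q i =ᶠ[nhds (0 : EuclideanSpace ℝ (Fin n))] (fun _ => 0) := by
        filter_upwards [hb] with y hy
        have : u y = 0 := huz y (by simpa [Metric.mem_ball] using hy)
        simp [hq_def, this]
      exact (contDiffAt_const (c := (0:ℝ))).congr_of_eventuallyEq this
    · have hnx : ‖x‖ ≠ 0 := norm_ne_zero_iff.mpr hx
      have hproj : ContDiffAt ℝ (⊤ : ℕ∞) (fun y : EuclideanSpace ℝ (Fin n) => y i) x := by
        have h : ContDiff ℝ (⊤ : ℕ∞) ⇑(EuclideanSpace.proj i : EuclideanSpace ℝ (Fin n) →L[ℝ] ℝ) :=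
          ContinuousLinearMap.contDiff _
        have he : (fun y : EuclideanSpace ℝ (Fin n) => y i)
            = ⇑(EuclideanSpace.proj i : EuclideanSpace ℝ (Fin n) →L[ℝ] ℝ) := by
          funext y; simp [PiLp.proj_apply]
        rw [he]
        exact h.contDiffAt
      have hnorm : ContDiffAt ℝ (⊤ : ℕ∞) (fun y : EuclideanSpace ℝ (Fin n) => ‖y‖⁻¹) x :=
        (contDiffAt_norm (𝕜 := ℝ) hx).inv hnx
      exact (hu.contDiffAt.mul hu.contDiffAt).mul (hnorm.mul hproj)
  have hq_supp : ∀ i, HasCompactSupport (q i) := by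
    intro i
    apply HasCompactSupport.intro hcpt.isCompact
    intro x hx
    have : u x = 0 := image_eq_zero_of_notMem_tsupport hx
    simp [hq_def, this]
  -- the two scalar integrands
  set f₁ : EuclideanSpace ℝ (Fin n) → ℝ := fun x => u x * u x / ‖x‖ with hf₁_def
  set f₂ : EuclideanSpace ℝ (Fin n) → ℝ := fun x => u x * fderiv ℝ u x x / ‖x‖ with hf₂_def
  have hDu_cont : Continuous (fun x : EuclideanSpace ℝ (Fin n) => fderiv ℝ u x x) :=
    (hu.continuous_fderiv (by simp)).clm_apply continuous_id
  have hcont_aux : ∀ (g : EuclideanSpace ℝ (Fin n) → ℝ), Continuous g →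
      (∀ x, u x = 0 → g x = 0) →
      Continuous (fun x => g x / ‖x‖) := by
    intro g hg hgz
    rw [continuous_iff_continuousAt]
    intro x
    by_cases hx : x = 0
    · subst hx
      have hb : Metric.ball (0 : EuclideanSpace ℝ (Fin n)) ε ∈
          nhds (0 : EuclideanSpace ℝ (Fin n)) := Metric.ball_mem_nhds _ hε
      have : (fun x : EuclideanSpace ℝ (Fin n) => g x / ‖x‖)
          =ᶠ[nhds (0 : EuclideanSpace ℝ (Fin n))] (fun _ => 0) := by
        filter_upwards [hb] with y hy
        have : u y = 0 := huz y (by simpa [Metric.mem_ball] using hy)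
        simp [hgz y this]
      exact (continuousAt_const (y := (0:ℝ))).congr this.symm
    · exact hg.continuousAt.div (continuous_norm.continuousAt) (norm_ne_zero_iff.mpr hx)
  have hf₁_cont : Continuous f₁ :=
    hcont_aux _ (hu.continuous.mul hu.continuous) (fun x hx => by simp [hx])
  have hf₂_cont : Continuous f₂ :=
    hcont_aux _ (hu.continuous.mul hDu_cont) (fun x hx => by simp [hx])
  have hf₁_supp : HasCompactSupport f₁ := by
    apply HasCompactSupport.intro hcpt.isCompact
    intro x hx
    simp [hf₁_def, image_eq_zero_of_notMem_tsupport hx]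
  have hf₂_supp : HasCompactSupport f₂ := by
    apply HasCompactSupport.intro hcpt.isCompact
    intro x hx
    simp [hf₂_def, image_eq_zero_of_notMem_tsupport hx]
  have hf₁_int : Integrable f₁ := hf₁_cont.integrable_of_hasCompactSupport hf₁_supp
  have hf₂_int : Integrable f₂ := hf₂_cont.integrable_of_hasCompactSupport hf₂_supp
  -- pointwise divergence identity
  have hpt : ∀ x : EuclideanSpace ℝ (Fin n),
      ∑ i : Fin n, fderiv ℝ (q i) x (EuclideanSpace.single i 1)
        = 2 * f₂ x + ((n : ℝ) - 1) * f₁ x := by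
    intro x
    by_cases hx : x = 0
    · subst hx
      have hb : Metric.ball (0 : EuclideanSpace ℝ (Fin n)) ε ∈
          nhds (0 : EuclideanSpace ℝ (Fin n)) := Metric.ball_mem_nhds _ hε
      have hz : ∀ i, fderiv ℝ (q i) (0 : EuclideanSpace ℝ (Fin n)) = 0 := by
        intro i
        have heq : q i =ᶠ[nhds (0 : EuclideanSpace ℝ (Fin n))] (fun _ => (0:ℝ)) := by
          filter_upwards [hb] with y hy
          have : u y = 0 := huz y (by simpa [Metric.mem_ball] using hy)
          simp [hq_def, this]
        rw [heq.fderiv_eq, fderiv_fun_const]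
        rfl
      have hu0 : u 0 = 0 := huz 0 (by simpa using hε)
      simp [hz, hf₁_def, hf₂_def, hu0]
    · rw [aux_sum u hu hx]
      simp only [hf₁_def, hf₂_def]
      ring
  -- integral of the divergence vanishes
  have hint_i : ∀ i : Fin n, Integrable
      (fun x : EuclideanSpace ℝ (Fin n) => fderiv ℝ (q i) x (EuclideanSpace.single i 1)) := by
    intro i
    apply Continuous.integrable_of_hasCompactSupport
    · exact ((hq_smooth i).continuous_fderiv (by simp)).clm_apply continuous_const
    · exact (hq_supp i).fderiv_apply ℝ _
  have hS : (2 : ℝ) * (∫ x, f₂ x) + ((n : ℝ) - 1) * (∫ x, f₁ x) = 0 := by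
    have h1 : ∫ x : EuclideanSpace ℝ (Fin n), (2 * f₂ x + ((n : ℝ) - 1) * f₁ x)
        = ∑ i : Fin n, ∫ x : EuclideanSpace ℝ (Fin n),
            fderiv ℝ (q i) x (EuclideanSpace.single i 1) := by
      rw [← integral_finset_sum _ (fun i _ => hint_i i)]
      apply integral_congr_ae
      filter_upwards with x
      exact (hpt x).symm
    have h2 : ∫ x : EuclideanSpace ℝ (Fin n), (2 * f₂ x + ((n : ℝ) - 1) * f₁ x)
        = 2 * (∫ x, f₂ x) + ((n : ℝ) - 1) * (∫ x, f₁ x) := by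
      rw [integral_add ((hf₂_int.const_mul 2)) ((hf₁_int.const_mul _)),
        integral_const_mul, integral_const_mul]
    rw [← h2, h1]
    exact Finset.sum_eq_zero fun i _ => aux_ibp (q i) (hq_smooth i) (hq_supp i) _
  -- gradient facts
  have hgrad_eq : ∀ x : EuclideanSpace ℝ (Fin n), ‖gradient u x‖ = ‖fderiv ℝ u x‖ := by
    intro x
    rw [gradient]
    exact LinearIsometryEquiv.norm_map _ _
  have hgrad_cont : Continuous (fun x : EuclideanSpace ℝ (Fin n) => gradient u x) := by
    simp only [gradient]
    exact (LinearIsometryEquiv.continuous _).comp (hu.continuous_fderiv (by simp))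
  have hgrad_supp : HasCompactSupport (fun x : EuclideanSpace ℝ (Fin n) => gradient u x) := by
    apply HasCompactSupport.intro hcpt.isCompact
    intro x hx
    have : fderiv ℝ u x = 0 := by
      have heq : u =ᶠ[nhds x] (fun _ => u x) := by
        have : (tsupport u)ᶜ ∈ nhds x :=
          (isClosed_tsupport u).isOpen_compl.mem_nhds hx
        filter_upwards [this] with y hy
        rw [image_eq_zero_of_notMem_tsupport hy, image_eq_zero_of_notMem_tsupport hx]
      rw [heq.fderiv_eq, fderiv_fun_const]
      rfl
    simp [gradient, this]
  -- pointwise bound |f₂| ≤ |u| * ‖∇u‖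
  have hpb : ∀ x : EuclideanSpace ℝ (Fin n), |f₂ x| ≤ |u x| * ‖gradient u x‖ := by
    intro x
    by_cases hx : x = 0
    · subst hx
      have hu0 : u 0 = 0 := huz 0 (by simpa using hε)
      simp [hf₂_def, hu0]
    · have hnx : 0 < ‖x‖ := norm_pos_iff.mpr hx
      have hb : |fderiv ℝ u x x| ≤ ‖fderiv ℝ u x‖ * ‖x‖ := by
        simpa using (fderiv ℝ u x).le_opNorm x
      have : |f₂ x| = |u x| * |fderiv ℝ u x x| / ‖x‖ := by
        simp [hf₂_def, abs_mul, abs_div, abs_of_pos hnx]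
      rw [this, hgrad_eq]
      rw [div_le_iff₀ hnx]
      calc |u x| * |fderiv ℝ u x x| ≤ |u x| * (‖fderiv ℝ u x‖ * ‖x‖) := by
            apply mul_le_mul_of_nonneg_left hb (abs_nonneg _)
        _ = |u x| * ‖fderiv ℝ u x‖ * ‖x‖ := by ring
  -- Cauchy–Schwarz
  have habs_cont : Continuous (fun x : EuclideanSpace ℝ (Fin n) => |u x|) := hu.continuous.abs
  have habs_supp : HasCompactSupport (fun x : EuclideanSpace ℝ (Fin n) => |u x|) :=
    hcpt.comp_left (g := fun t : ℝ => |t|) (by simp)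
  have hJ_cont : Continuous (fun x : EuclideanSpace ℝ (Fin n) => |u x| * ‖gradient u x‖) :=
    habs_cont.mul hgrad_cont.norm
  have hJ_supp : HasCompactSupport
      (fun x : EuclideanSpace ℝ (Fin n) => |u x| * ‖gradient u x‖) := by
    apply HasCompactSupport.intro hcpt.isCompact
    intro x hx
    simp [image_eq_zero_of_notMem_tsupport hx]
  have hJ_int : Integrable (fun x : EuclideanSpace ℝ (Fin n) => |u x| * ‖gradient u x‖) :=
    hJ_cont.integrable_of_hasCompactSupport hJ_supp
  set X : ℝ := ∫ x : EuclideanSpace ℝ (Fin n), |u x| ^ 2 with hX_def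
  set Y : ℝ := ∫ x : EuclideanSpace ℝ (Fin n), ‖gradient u x‖ ^ 2 with hY_def
  have hX_nonneg : 0 ≤ X := integral_nonneg fun x => by positivity
  have hY_nonneg : 0 ≤ Y := integral_nonneg fun x => by positivity
  have hCS : (∫ x : EuclideanSpace ℝ (Fin n), |u x| * ‖gradient u x‖)
      ≤ X ^ ((1:ℝ)/2) * Y ^ ((1:ℝ)/2) := by
    have hpq : Real.HolderConjugate 2 2 := Real.HolderConjugate.two_two
    have hm1 : MemLp (fun x : EuclideanSpace ℝ (Fin n) => |u x|) (ENNReal.ofReal 2) volume :=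
      habs_cont.memLp_of_hasCompactSupport habs_supp
    have hm2 : MemLp (fun x : EuclideanSpace ℝ (Fin n) => ‖gradient u x‖)
        (ENNReal.ofReal 2) volume :=
      hgrad_cont.norm.memLp_of_hasCompactSupport (by
        apply HasCompactSupport.intro hcpt.isCompact
        intro x hx
        have : fderiv ℝ u x = 0 := by
          have heq : u =ᶠ[nhds x] (fun _ => u x) := by
            have : (tsupport u)ᶜ ∈ nhds x :=
              (isClosed_tsupport u).isOpen_compl.mem_nhds hx
            filter_upwards [this] with y hy
            rw [image_eq_zero_of_notMem_tsupport hy, image_eq_zero_of_notMem_tsupport hx]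
          rw [heq.fderiv_eq, fderiv_fun_const]
          rfl
        simp [gradient, this])
    have := integral_mul_le_Lp_mul_Lq_of_nonneg hpq
      (f := fun x : EuclideanSpace ℝ (Fin n) => |u x|)
      (g := fun x : EuclideanSpace ℝ (Fin n) => ‖gradient u x‖)
      (Filter.Eventually.of_forall fun x => abs_nonneg _)
      (Filter.Eventually.of_forall fun x => norm_nonneg _) hm1 hm2
    have hXr : ∫ x : EuclideanSpace ℝ (Fin n), |u x| ^ (2:ℝ) = X := by
      rw [hX_def]
      apply integral_congr_ae
      filter_upwards with x
      rw [show (2:ℝ) = ((2:ℕ):ℝ) by norm_num, Real.rpow_natCast]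
    have hYr : ∫ x : EuclideanSpace ℝ (Fin n), ‖gradient u x‖ ^ (2:ℝ) = Y := by
      rw [hY_def]
      apply integral_congr_ae
      filter_upwards with x
      rw [show (2:ℝ) = ((2:ℕ):ℝ) by norm_num, Real.rpow_natCast]
    rw [hXr, hYr] at this
    exact this
  -- assemble
  set A : ℝ := ∫ x : EuclideanSpace ℝ (Fin n), |u x| ^ 2 / ‖x‖ with hA_def
  have hA_eq : A = ∫ x, f₁ x := by
    rw [hA_def]
    apply integral_congr_ae
    filter_upwards with x
    simp [hf₁_def, sq_abs, sq]
  have hA_nonneg : 0 ≤ A := integral_nonneg fun x => by positivity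
  have hI_bound : |∫ x, f₂ x| ≤ X ^ ((1:ℝ)/2) * Y ^ ((1:ℝ)/2) := by
    calc |∫ x, f₂ x| ≤ ∫ x, |f₂ x| := by
          simpa using norm_integral_le_integral_norm f₂
      _ ≤ ∫ x : EuclideanSpace ℝ (Fin n), |u x| * ‖gradient u x‖ :=
          integral_mono hf₂_int.abs hJ_int hpb
      _ ≤ X ^ ((1:ℝ)/2) * Y ^ ((1:ℝ)/2) := hCS
  have hn1 : (0:ℝ) < (n:ℝ) - 1 := by
    have : (2:ℝ) ≤ (n:ℝ) := by exact_mod_cast hn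
    linarith
  have hkey : ((n:ℝ) - 1) * A ≤ 2 * (X ^ ((1:ℝ)/2) * Y ^ ((1:ℝ)/2)) := by
    have habs : -(∫ x, f₂ x) ≤ |∫ x, f₂ x| := neg_le_abs _
    have heq2 : ((n:ℝ) - 1) * A = -(2 * (∫ x, f₂ x)) := by
      rw [hA_eq]; linarith [hS]
    rw [heq2]
    linarith [hI_bound]
  have hsq : (X ^ ((1:ℝ)/2) * Y ^ ((1:ℝ)/2)) ^ 2 = X * Y := by
    rw [mul_pow, ← Real.rpow_natCast (X ^ ((1:ℝ)/2)) 2, ← Real.rpow_natCast (Y ^ ((1:ℝ)/2)) 2,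
      ← Real.rpow_mul hX_nonneg, ← Real.rpow_mul hY_nonneg]
    norm_num
  have hlhs : (((n:ℝ) - 1) * A) ^ 2 ≤ 4 * (X * Y) := by
    have hr : 0 ≤ 2 * (X ^ ((1:ℝ)/2) * Y ^ ((1:ℝ)/2)) := by positivity
    have hl : 0 ≤ ((n:ℝ) - 1) * A := by positivity
    have := mul_self_le_mul_self hl hkey
    calc (((n:ℝ) - 1) * A) ^ 2 = (((n:ℝ) - 1) * A) * (((n:ℝ) - 1) * A) := sq _
      _ ≤ (2 * (X ^ ((1:ℝ)/2) * Y ^ ((1:ℝ)/2))) * (2 * (X ^ ((1:ℝ)/2) * Y ^ ((1:ℝ)/2))) := this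
      _ = 4 * (X ^ ((1:ℝ)/2) * Y ^ ((1:ℝ)/2)) ^ 2 := by ring
      _ = 4 * (X * Y) := by rw [hsq]
  have hn1sq : (0:ℝ) < ((n:ℝ) - 1) ^ 2 := by positivity
  show A ^ 2 ≤ 4 / ((n:ℝ) - 1) ^ 2 * (X * Y)
  rw [div_mul_eq_mul_div, le_div_iff₀ hn1sq]
  calc A ^ 2 * ((n:ℝ) - 1) ^ 2 = (((n:ℝ) - 1) * A) ^ 2 := by ring
    _ ≤ 4 * (X * Y) := hlhs
end

section
/- Let n ≥ 1 and let a, b ∈ ℝ with n ≠ a + b + 1. Then for every u ∈ C_c^∞(ℝⁿ \ {0}), |(n − a − b − 1)/2| · ∫_{ℝⁿ} |u(x)|² / |x|^{a+b+1} dx ≤ (1/2) · (∫_{ℝⁿ} |u(x)|² / |x|^{2a} dx + ∫_{ℝⁿ} |∇u(x)|² / |x|^{2b} dx). -/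
open MeasureTheory Real Filter Topology

set_option maxHeartbeats 1000000

private lemma exists_smooth_cutoff (ε p : ℝ) (hε : 0 < ε) :
    ∃ ψ : ℝ → ℝ, ContDiff ℝ (⊤ : ℕ∞) ψ ∧ ∀ t : ℝ, ε < t → ψ t = t ^ p := by
  refine ⟨fun t => Real.smoothTransition ((2 * t - ε) / ε) * t ^ p, ?_, ?_⟩
  · rw [contDiff_iff_contDiffAt]
    intro t
    rcases lt_or_ge t (ε / 2) with ht | ht
    · apply ContDiffAt.congr_of_eventuallyEq (contDiffAt_const (c := (0:ℝ)))
      have hev : ∀ᶠ s in 𝓝 t, s ∈ Set.Iio (ε / 2) := isOpen_Iio.eventually_mem ht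
      filter_upwards [hev] with s hs
      have hs' : s < ε / 2 := hs
      have : (2 * s - ε) / ε ≤ 0 :=
        div_nonpos_of_nonpos_of_nonneg (by linarith) hε.le
      simp [Real.smoothTransition.zero_of_nonpos this]
    · have ht0 : (0 : ℝ) < t := lt_of_lt_of_le (by linarith) ht
      exact (Real.smoothTransition.contDiffAt.comp t
          (((contDiffAt_const.mul contDiffAt_id).sub contDiffAt_const).div_const ε)).mul
        (Real.contDiffAt_rpow_const_of_ne (ne_of_gt ht0))
  · intro t ht
    have h1 : (1 : ℝ) ≤ (2 * t - ε) / ε := by rw [le_div_iff₀ hε]; linarith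
    simp only []; rw [Real.smoothTransition.one_of_one_le h1, one_mul]

theorem embedding_quantitative_euclidean
    (n : ℕ) (hn : 1 ≤ n) (a b : ℝ) (hnab : (n : ℝ) ≠ a + b + 1)
    (u : EuclideanSpace ℝ (Fin n) → ℝ)
    (hu : ContDiff ℝ (⊤ : ℕ∞) u) (hcpt : HasCompactSupport u)
    (hsupp : tsupport u ⊆ {0}ᶜ) :
    |((n : ℝ) - a - b - 1) / 2| *
        ∫ x : EuclideanSpace ℝ (Fin n), |u x| ^ 2 / ‖x‖ ^ (a + b + 1) ≤
      1 / 2 * ((∫ x : EuclideanSpace ℝ (Fin n), |u x| ^ 2 / ‖x‖ ^ (2 * a)) +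
        ∫ x : EuclideanSpace ℝ (Fin n), ‖gradient u x‖ ^ 2 / ‖x‖ ^ (2 * b)) := by
  classical
  have hu' : ContDiff ℝ ((⊤ : ℕ∞) : WithTop ℕ∞) u := hu.of_le (by simp)
  have hud : Differentiable ℝ u := hu'.differentiable (by simp)
  have hfc : Continuous (fun x => fderiv ℝ u x) := hu'.continuous_fderiv (by simp)
  set c : ℝ := a + b + 1 with hcdef
  -- choose ε with u vanishing on the ball of radius ε
  obtain ⟨ε, hε, hball⟩ : ∃ ε > 0, ∀ x : EuclideanSpace ℝ (Fin n), ‖x‖ < ε → u x = 0 := by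
    have h0 : (0 : EuclideanSpace ℝ (Fin n)) ∈ (tsupport u)ᶜ := fun h => hsupp h rfl
    obtain ⟨ε, hε, hb⟩ := Metric.isOpen_iff.1 (isClosed_tsupport u).isOpen_compl 0 h0
    exact ⟨ε, hε, fun x hx => image_eq_zero_of_notMem_tsupport
      (hb (mem_ball_zero_iff.2 hx))⟩
  have hsupp' : ∀ x : EuclideanSpace ℝ (Fin n), u x ≠ 0 → ε ≤ ‖x‖ :=
    fun x hx => le_of_not_gt fun h => hx (hball x h)
  have hfd0 : ∀ x : EuclideanSpace ℝ (Fin n), x ∉ tsupport u → fderiv ℝ u x = 0 :=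
    fun x hx => Function.notMem_support.1 fun hs => hx (support_fderiv_subset ℝ hs)
  have hfd0' : ∀ x : EuclideanSpace ℝ (Fin n), ‖x‖ < ε → fderiv ℝ u x = 0 := by
    intro x hx
    have hev : u =ᶠ[𝓝 x] fun _ => (0:ℝ) := by
      filter_upwards [Metric.isOpen_ball.eventually_mem
        (mem_ball_zero_iff.2 hx : x ∈ Metric.ball (0 : EuclideanSpace ℝ (Fin n)) ε)] with y hy
      exact hball y (mem_ball_zero_iff.1 hy)
    rw [hev.fderiv_eq, fderiv_fun_const]
    rfl
  -- the cutoff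
  obtain ⟨ψ, hψs, hψeq⟩ := exists_smooth_cutoff (ε ^ 2 / 2) (-c / 2) (by positivity)
  set g : Fin n → EuclideanSpace ℝ (Fin n) → ℝ := fun i x => x i * ψ (‖x‖ ^ 2) with hgdef
  have hgsmooth : ∀ i, ContDiff ℝ ((⊤ : ℕ∞) : WithTop ℕ∞) (g i) := fun i =>
    ((EuclideanSpace.proj i).contDiff).mul (hψs.comp (contDiff_norm_sq ℝ))
  set e : Fin n → EuclideanSpace ℝ (Fin n) := fun i => EuclideanSpace.single i 1 with hedef
  have hqc : ∀ x : EuclideanSpace ℝ (Fin n), ((‖x‖ ^ 2 : ℝ)) ^ (-c / 2) = ‖x‖ ^ (-c) := by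
    intro x
    rw [← Real.rpow_natCast ‖x‖ 2, ← Real.rpow_mul (norm_nonneg x)]
    congr 1
    push_cast
    ring
  have hsq : ∀ x : EuclideanSpace ℝ (Fin n), ε ≤ ‖x‖ → ε ^ 2 / 2 < ‖x‖ ^ 2 := by
    intro x hx
    nlinarith [hε, norm_nonneg x]
  -- value of g on the support
  have hgval : ∀ x : EuclideanSpace ℝ (Fin n), ε ≤ ‖x‖ → ∀ i, g i x = x i * ‖x‖ ^ (-c) := by
    intro x hx i
    show x i * ψ (‖x‖ ^ 2) = x i * ‖x‖ ^ (-c)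
    rw [hψeq _ (hsq x hx), hqc]
  -- derivative of g on the support
  have hmodel : ∀ x : EuclideanSpace ℝ (Fin n), ε ≤ ‖x‖ → ∀ i,
      fderiv ℝ (g i) x = (x i) • (((-c / 2) * (‖x‖ ^ 2 : ℝ) ^ (-c / 2 - 1)) • (2 • innerSL ℝ x))
        + ((‖x‖ ^ 2 : ℝ) ^ (-c / 2)) •
          (EuclideanSpace.proj i : EuclideanSpace ℝ (Fin n) →L[ℝ] ℝ) := by
    intro x hx i
    have hx0 : x ≠ 0 := by
      intro h; rw [h, norm_zero] at hx; linarith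
    have hq0 : (‖x‖ ^ 2 : ℝ) ≠ 0 := pow_ne_zero _ (norm_ne_zero_iff.2 hx0)
    have hQ : HasFDerivAt (fun y : EuclideanSpace ℝ (Fin n) => ‖y‖ ^ 2) (2 • innerSL ℝ x) x :=
      (hasStrictFDerivAt_norm_sq x).hasFDerivAt
    have hR : HasFDerivAt (fun y : EuclideanSpace ℝ (Fin n) => (‖y‖ ^ 2 : ℝ) ^ (-c / 2))
        (((-c / 2) * (‖x‖ ^ 2 : ℝ) ^ (-c / 2 - 1)) • (2 • innerSL ℝ x)) x :=
      hQ.rpow_const (Or.inl hq0)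
    have hP := (EuclideanSpace.proj (𝕜 := ℝ) i :
      EuclideanSpace ℝ (Fin n) →L[ℝ] ℝ).hasFDerivAt (x := x)
    have hM : HasFDerivAt (fun y => (EuclideanSpace.proj (𝕜 := ℝ) i) y * (‖y‖ ^ 2 : ℝ) ^ (-c / 2)) _ x := hP.mul hR
    have hev : g i =ᶠ[𝓝 x]
        fun y => (EuclideanSpace.proj (𝕜 := ℝ) i) y * (‖y‖ ^ 2 : ℝ) ^ (-c / 2) := by
      have hopen : IsOpen {y : EuclideanSpace ℝ (Fin n) | ε ^ 2 / 2 < ‖y‖ ^ 2} :=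
        isOpen_lt continuous_const (continuous_norm.pow 2)
      filter_upwards [hopen.eventually_mem (hsq x hx)] with y hy
      show y i * ψ (‖y‖ ^ 2) = (EuclideanSpace.proj (𝕜 := ℝ) i) y * (‖y‖ ^ 2 : ℝ) ^ (-c / 2)
      rw [hψeq _ hy, PiLp.proj_apply]
    rw [hev.fderiv_eq, hM.fderiv]
    simp [PiLp.proj_apply]
  -- divergence of the vector field on the support
  have hdiv : ∀ x : EuclideanSpace ℝ (Fin n), ε ≤ ‖x‖ →
      ∑ i, fderiv ℝ (g i) x (e i) = ((n : ℝ) - c) * ‖x‖ ^ (-c) := by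
    intro x hx
    have hx0 : x ≠ 0 := by
      intro h; rw [h, norm_zero] at hx; linarith
    have hq : (0 : ℝ) < ‖x‖ ^ 2 := pow_pos (norm_pos_iff.2 hx0) 2
    have happ : ∀ i, fderiv ℝ (g i) x (e i)
        = (‖x‖ ^ 2 : ℝ) ^ (-c / 2) + (-c) * (‖x‖ ^ 2 : ℝ) ^ (-c / 2 - 1) * (x i) ^ 2 := by
      intro i
      rw [hmodel x hx i]
      simp only [hedef, ContinuousLinearMap.add_apply, ContinuousLinearMap.smul_apply,
        ContinuousLinearMap.coe_smul', Pi.smul_apply, innerSL_apply_apply, smul_eq_mul,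
        EuclideanSpace.inner_single_right, RCLike.conj_to_real, map_one,
        PiLp.proj_apply, EuclideanSpace.single_apply, if_pos rfl, mul_one]
      norm_num
      ring
    have hsum : ∑ i, (x i) ^ 2 = ‖x‖ ^ 2 := by
      rw [EuclideanSpace.norm_eq, Real.sq_sqrt (by positivity)]
      exact Finset.sum_congr rfl fun i _ => by rw [Real.norm_eq_abs, sq_abs]
    calc ∑ i, fderiv ℝ (g i) x (e i)
        = ∑ i : Fin n, ((‖x‖ ^ 2 : ℝ) ^ (-c / 2)
            + (-c) * (‖x‖ ^ 2 : ℝ) ^ (-c / 2 - 1) * (x i) ^ 2) :=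
          Finset.sum_congr rfl fun i _ => happ i
      _ = (n : ℝ) * (‖x‖ ^ 2 : ℝ) ^ (-c / 2)
            + (-c) * (‖x‖ ^ 2 : ℝ) ^ (-c / 2 - 1) * (‖x‖ ^ 2) := by
          rw [Finset.sum_add_distrib, Finset.sum_const, ← Finset.mul_sum, hsum]
          simp [Finset.card_univ, nsmul_eq_mul]
      _ = ((n : ℝ) - c) * (‖x‖ ^ 2 : ℝ) ^ (-c / 2) := by
          have h1 : (‖x‖ ^ 2 : ℝ) ^ (-c / 2 - 1) * (‖x‖ ^ 2) = (‖x‖ ^ 2 : ℝ) ^ (-c / 2) := by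
            nth_rewrite 2 [← Real.rpow_one (‖x‖ ^ 2 : ℝ)]
            rw [← Real.rpow_add hq]
            norm_num
          rw [mul_assoc, h1]; ring
      _ = ((n : ℝ) - c) * ‖x‖ ^ (-c) := by rw [hqc]
  -- derivative of u ^ 2
  have hfd2 : ∀ x, HasFDerivAt (fun y => u y ^ 2) ((2 * u x) • fderiv ℝ u x) x := by
    intro x
    have h := ((hud x).hasFDerivAt).mul ((hud x).hasFDerivAt)
    have heq : (fun y => u y ^ 2) = fun y => u y * u y := funext fun y => sq (u y)
    rw [heq]
    rw [show (2 * u x) • fderiv ℝ u x = u x • fderiv ℝ u x + u x • fderiv ℝ u x by rw [two_mul, add_smul]]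
    exact h
  have hfd2' : ∀ x, fderiv ℝ (fun y => u y ^ 2) x = (2 * u x) • fderiv ℝ u x :=
    fun x => (hfd2 x).fderiv
  -- reconstruction of a linear map from coordinates
  have hrep : ∀ (L : EuclideanSpace ℝ (Fin n) →L[ℝ] ℝ) (x : EuclideanSpace ℝ (Fin n)),
      ∑ i, x i * L (e i) = L x := by
    intro L x
    have hx : ∑ i, (x i) • e i = x := by
      have h := (EuclideanSpace.basisFun (Fin n) ℝ).sum_repr x
      simpa [hedef, EuclideanSpace.basisFun_repr, EuclideanSpace.basisFun_apply] using h
    conv_rhs => rw [← hx]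
    rw [map_sum]
    exact Finset.sum_congr rfl fun i _ => by rw [ContinuousLinearMap.map_smul, smul_eq_mul]
  -- integrability helpers
  have hcompact : ∀ ρ : EuclideanSpace ℝ (Fin n) → ℝ,
      (∀ x, x ∉ tsupport u → ρ x = 0) → Continuous ρ → Integrable ρ := fun ρ h hcρ =>
    hcρ.integrable_of_hasCompactSupport (HasCompactSupport.intro hcpt h)
  have hcont_div : ∀ (φ : EuclideanSpace ℝ (Fin n) → ℝ) (p : ℝ), Continuous φ →
      (∀ x, ‖x‖ < ε → φ x = 0) → Continuous (fun x => φ x / ‖x‖ ^ p) := by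
    intro φ p hφ h0
    rw [continuous_iff_continuousAt]
    intro x
    rcases lt_or_ge ‖x‖ ε with hx | hx
    · have hev : (fun y => φ y / ‖y‖ ^ p) =ᶠ[𝓝 x] fun _ => (0:ℝ) := by
        filter_upwards [Metric.isOpen_ball.eventually_mem
          (mem_ball_zero_iff.2 hx : x ∈ Metric.ball (0 : EuclideanSpace ℝ (Fin n)) ε)] with y hy
        rw [h0 y (mem_ball_zero_iff.1 hy), zero_div]
      exact ContinuousAt.congr continuousAt_const hev.symm
    · have hxpos : (0:ℝ) < ‖x‖ := lt_of_lt_of_le hε hx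
      exact (hφ.continuousAt).div
        (ContinuousAt.rpow_const continuous_norm.continuousAt (Or.inl hxpos.ne'))
        (Real.rpow_pos_of_pos hxpos p).ne'
  have hint_div : ∀ (φ : EuclideanSpace ℝ (Fin n) → ℝ) (p : ℝ), Continuous φ →
      (∀ x, x ∉ tsupport u → φ x = 0) → (∀ x, ‖x‖ < ε → φ x = 0) →
      Integrable (fun x => φ x / ‖x‖ ^ p) := by
    intro φ p hφ h0 h1
    refine hcompact _ (fun x hx => by rw [h0 x hx, zero_div]) (hcont_div φ p hφ h1)
  -- continuity facts
  have hcont_u : Continuous u := hu.continuous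
  have hcont_D : Continuous (fun x : EuclideanSpace ℝ (Fin n) => fderiv ℝ u x x) :=
    hfc.clm_apply continuous_id
  have hcont_g : ∀ i, Continuous (g i) := fun i => (hgsmooth i).continuous
  have hcont_fg : ∀ i, Continuous (fun x => fderiv ℝ (g i) x (e i)) := fun i =>
    ((hgsmooth i).continuous_fderiv (by simp)).clm_apply continuous_const
  have hcont_fu2 : ∀ i, Continuous (fun x => fderiv ℝ (fun y => u y ^ 2) x (e i)) := by
    intro i
    have : (fun x => fderiv ℝ (fun y => u y ^ 2) x (e i))
        = fun x => (2 * u x) * (fderiv ℝ u x (e i)) := by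
      funext x
      rw [hfd2' x]
      simp
    rw [this]
    exact (continuous_const.mul hcont_u).mul (hfc.clm_apply continuous_const)
  -- integrability of the three products used in IBP
  have hint1 : ∀ i, Integrable (fun x => fderiv ℝ (fun y => u y ^ 2) x (e i) * g i x) := by
    intro i
    refine hcompact _ (fun x hx => ?_) ((hcont_fu2 i).mul (hcont_g i))
    rw [hfd2' x, image_eq_zero_of_notMem_tsupport hx]
    simp
  have hint2 : ∀ i, Integrable (fun x => u x ^ 2 * fderiv ℝ (g i) x (e i)) := by
    intro i
    refine hcompact _ (fun x hx => ?_) ((hcont_u.pow 2).mul (hcont_fg i))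
    rw [image_eq_zero_of_notMem_tsupport hx]
    simp
  have hint3 : ∀ i, Integrable (fun x => u x ^ 2 * g i x) := by
    intro i
    refine hcompact _ (fun x hx => ?_) ((hcont_u.pow 2).mul (hcont_g i))
    rw [image_eq_zero_of_notMem_tsupport hx]
    simp
  -- integration by parts
  have hibp : ∀ i, ∫ x, u x ^ 2 * fderiv ℝ (g i) x (e i)
      = - ∫ x, fderiv ℝ (fun y => u y ^ 2) x (e i) * g i x := by
    intro i
    exact integral_mul_fderiv_eq_neg_fderiv_mul_of_integrable (hint1 i) (hint2 i) (hint3 i)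
      (fun x _ => (hfd2 x).differentiableAt) (fun x _ => (hgsmooth i).differentiable (by simp) x)
  -- E1 identity
  have hE1 : ∫ x : EuclideanSpace ℝ (Fin n), ((n:ℝ) - c) * (u x ^ 2 / ‖x‖ ^ c)
      = ∑ i, ∫ x, u x ^ 2 * fderiv ℝ (g i) x (e i) := by
    rw [← integral_finset_sum _ (fun i _ => hint2 i)]
    refine integral_congr_ae (Filter.Eventually.of_forall fun x => ?_)
    beta_reduce
    rcases eq_or_ne (u x) 0 with h | h
    · simp [h]
    · have hx := hsupp' x h
      have hxpos : (0:ℝ) < ‖x‖ := lt_of_lt_of_le hε hx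
      rw [← Finset.mul_sum, hdiv x hx, Real.rpow_neg (norm_nonneg x), div_eq_mul_inv]
      ring
  -- E2 identity
  have hE2 : ∑ i, ∫ x, fderiv ℝ (fun y => u y ^ 2) x (e i) * g i x
      = ∫ x : EuclideanSpace ℝ (Fin n), (2 * u x * fderiv ℝ u x x) / ‖x‖ ^ c := by
    rw [← integral_finset_sum _ (fun i _ => hint1 i)]
    refine integral_congr_ae (Filter.Eventually.of_forall fun x => ?_)
    beta_reduce
    rcases eq_or_ne (u x) 0 with h | h
    · simp [hfd2', h]
    · have hx := hsupp' x h
      have hxpos : (0:ℝ) < ‖x‖ := lt_of_lt_of_le hε hx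
      calc ∑ i, fderiv ℝ (fun y => u y ^ 2) x (e i) * g i x
          = ∑ i, (2 * u x) * (fderiv ℝ u x (e i)) * (x i * ‖x‖ ^ (-c)) := by
            refine Finset.sum_congr rfl fun i _ => ?_
            rw [hfd2' x, hgval x hx i]
            simp
        _ = (2 * u x * ‖x‖ ^ (-c)) * ∑ i, x i * fderiv ℝ u x (e i) := by
            rw [Finset.mul_sum]
            exact Finset.sum_congr rfl fun i _ => by ring
        _ = (2 * u x * ‖x‖ ^ (-c)) * fderiv ℝ u x x := by rw [hrep (fderiv ℝ u x) x]
        _ = (2 * u x * fderiv ℝ u x x) / ‖x‖ ^ c := by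
            rw [Real.rpow_neg (norm_nonneg x), div_eq_mul_inv]
            ring
  -- the key identity
  have hkey : ((n:ℝ) - c) * ∫ x : EuclideanSpace ℝ (Fin n), u x ^ 2 / ‖x‖ ^ c
      = - ∫ x : EuclideanSpace ℝ (Fin n), (2 * u x * fderiv ℝ u x x) / ‖x‖ ^ c := by
    rw [← integral_const_mul, hE1, Finset.sum_congr rfl fun i _ => hibp i,
      Finset.sum_neg_distrib, hE2]
  -- gradient norm
  have hgradu : ∀ x, ‖gradient u x‖ = ‖fderiv ℝ u x‖ := fun x =>
    (InnerProductSpace.toDual ℝ (EuclideanSpace ℝ (Fin n))).symm.norm_map (fderiv ℝ u x)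
  -- integrability of the final integrands
  have hIntL : Integrable
      (fun x : EuclideanSpace ℝ (Fin n) => (2 * u x * fderiv ℝ u x x) / ‖x‖ ^ c) := by
    refine hint_div _ c ((continuous_const.mul hcont_u).mul hcont_D) (fun x hx => ?_)
      (fun x hx => ?_)
    · rw [image_eq_zero_of_notMem_tsupport hx]; ring
    · rw [hball x hx]; ring
  have hA : Integrable (fun x : EuclideanSpace ℝ (Fin n) => u x ^ 2 / ‖x‖ ^ (2 * a)) := by
    refine hint_div _ _ (hcont_u.pow 2) (fun x hx => ?_) (fun x hx => ?_)
    · rw [image_eq_zero_of_notMem_tsupport hx]; ring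
    · rw [hball x hx]; ring
  have hB : Integrable
      (fun x : EuclideanSpace ℝ (Fin n) => ‖gradient u x‖ ^ 2 / ‖x‖ ^ (2 * b)) := by
    refine hint_div _ _ ?_ (fun x hx => ?_) (fun x hx => ?_)
    · have : (fun x : EuclideanSpace ℝ (Fin n) => ‖gradient u x‖ ^ 2)
          = fun x => ‖fderiv ℝ u x‖ ^ 2 := funext fun x => by rw [hgradu]
      rw [this]
      exact hfc.norm.pow 2
    · rw [hgradu, hfd0 x hx]; simp
    · rw [hgradu, hfd0' x hx]; simp
  -- pointwise bound
  have hpt : ∀ x : EuclideanSpace ℝ (Fin n), |2 * u x * fderiv ℝ u x x / ‖x‖ ^ c|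
      ≤ u x ^ 2 / ‖x‖ ^ (2 * a) + ‖gradient u x‖ ^ 2 / ‖x‖ ^ (2 * b) := by
    intro x
    rcases eq_or_ne (u x) 0 with h | h
    · simp only [h, mul_zero, zero_mul, zero_div, abs_zero]
      positivity
    · have hx := hsupp' x h
      have hxpos : (0:ℝ) < ‖x‖ := lt_of_lt_of_le hε hx
      have hpa : (0:ℝ) < ‖x‖ ^ a := Real.rpow_pos_of_pos hxpos a
      have hpb : (0:ℝ) < ‖x‖ ^ b := Real.rpow_pos_of_pos hxpos b
      have ha2 : ‖x‖ ^ (2 * a) = (‖x‖ ^ a) ^ 2 := by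
        rw [← Real.rpow_natCast (‖x‖ ^ a) 2, ← Real.rpow_mul (norm_nonneg x)]
        norm_num
        ring_nf
      have hb2 : ‖x‖ ^ (2 * b) = (‖x‖ ^ b) ^ 2 := by
        rw [← Real.rpow_natCast (‖x‖ ^ b) 2, ← Real.rpow_mul (norm_nonneg x)]
        norm_num
        ring_nf
      have hc1 : ‖x‖ ^ c = ‖x‖ ^ a * ‖x‖ ^ b * ‖x‖ := by
        rw [hcdef, Real.rpow_add hxpos, Real.rpow_add hxpos, Real.rpow_one]
      calc |2 * u x * fderiv ℝ u x x / ‖x‖ ^ c|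
          = 2 * |u x| * |fderiv ℝ u x x| / ‖x‖ ^ c := by
            rw [abs_div, abs_of_nonneg (Real.rpow_nonneg (norm_nonneg x) c), abs_mul,
              abs_mul, abs_two]
        _ ≤ 2 * |u x| * (‖fderiv ℝ u x‖ * ‖x‖) / ‖x‖ ^ c := by
            gcongr
            simpa [Real.norm_eq_abs] using (fderiv ℝ u x).le_opNorm x
        _ = 2 * (|u x| / ‖x‖ ^ a) * (‖fderiv ℝ u x‖ / ‖x‖ ^ b) := by
            rw [hc1]
            field_simp
        _ ≤ (|u x| / ‖x‖ ^ a) ^ 2 + (‖fderiv ℝ u x‖ / ‖x‖ ^ b) ^ 2 :=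
            two_mul_le_add_sq _ _
        _ = u x ^ 2 / ‖x‖ ^ (2 * a) + ‖gradient u x‖ ^ 2 / ‖x‖ ^ (2 * b) := by
            rw [hgradu, div_pow, div_pow, sq_abs, ha2, hb2]
  -- assembling
  have hI : (0:ℝ) ≤ ∫ x : EuclideanSpace ℝ (Fin n), u x ^ 2 / ‖x‖ ^ c :=
    integral_nonneg fun x => by positivity
  have habs : |(n:ℝ) - c| * ∫ x : EuclideanSpace ℝ (Fin n), u x ^ 2 / ‖x‖ ^ c
      ≤ (∫ x : EuclideanSpace ℝ (Fin n), u x ^ 2 / ‖x‖ ^ (2 * a))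
        + ∫ x : EuclideanSpace ℝ (Fin n), ‖gradient u x‖ ^ 2 / ‖x‖ ^ (2 * b) := by
    calc |(n:ℝ) - c| * ∫ x : EuclideanSpace ℝ (Fin n), u x ^ 2 / ‖x‖ ^ c
        = |((n:ℝ) - c) * ∫ x : EuclideanSpace ℝ (Fin n), u x ^ 2 / ‖x‖ ^ c| := by
          rw [abs_mul, abs_of_nonneg hI]
      _ = |∫ x : EuclideanSpace ℝ (Fin n), (2 * u x * fderiv ℝ u x x) / ‖x‖ ^ c| := by
          rw [hkey, abs_neg]
      _ ≤ ∫ x : EuclideanSpace ℝ (Fin n), |(2 * u x * fderiv ℝ u x x) / ‖x‖ ^ c| := by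
          exact norm_integral_le_integral_norm
            (fun x : EuclideanSpace ℝ (Fin n) => (2 * u x * fderiv ℝ u x x) / ‖x‖ ^ c)
      _ ≤ ∫ x : EuclideanSpace ℝ (Fin n), (u x ^ 2 / ‖x‖ ^ (2 * a)
            + ‖gradient u x‖ ^ 2 / ‖x‖ ^ (2 * b)) :=
          integral_mono hIntL.abs (hA.add hB) hpt
      _ = (∫ x : EuclideanSpace ℝ (Fin n), u x ^ 2 / ‖x‖ ^ (2 * a))
            + ∫ x : EuclideanSpace ℝ (Fin n), ‖gradient u x‖ ^ 2 / ‖x‖ ^ (2 * b) :=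
          integral_add hA hB
  simp only [sq_abs]
  have hcc : (n:ℝ) - a - b - 1 = (n:ℝ) - c := by rw [hcdef]; ring
  rw [hcc, abs_div, abs_two]
  nlinarith [habs, abs_nonneg ((n:ℝ) - c), hI]
end
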